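/- arXiv:2204.12545 — 5 statements merged into one kernel-verified Lean document; each statement's English description precedes it below -/
import Mathlib

section
/- Let (X,d) be a δ-hyperbolic pseudometric space, x,y ∈ X, and p ∈ ∂X. Then |β_d(x,y;p) + β_d(y,x;p)| ≤ 8δ. -/
open Filter Set MeasureTheory Topology

noncomputable section

variable {X : Type*}

/-- The Gromov product `(x|y)_w` with respect to `d`. -/
def gp (d : X → X → ℝ) (w x y : X) : ℝ := (d x w + d y w - d x y) / 2

/-- `d` is a pseudometric. -/
def IsPseudometric (d : X → X → ℝ) : Prop :=
  (∀ x, d x x = 0) ∧ (∀ x y, d x y = d y x) ∧ (∀ x y z, d x z ≤ d x y + d y z)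

/-- `d` is `δ`-hyperbolic: the four-point Gromov product condition. -/
def GromovHyperbolic (d : X → X → ℝ) (δ : ℝ) : Prop :=
  ∀ x y z w, min (gp d w x y) (gp d w y z) - δ ≤ gp d w x z

/-- `d` is `α`-rough geodesic: any two points are joined by an `α`-rough geodesic. -/
def RoughGeodesic (d : X → X → ℝ) (α : ℝ) : Prop :=
  ∀ x y : X, ∃ (n : ℕ) (γ : ℕ → X), γ 0 = x ∧ γ n = y ∧
    ∀ i j : ℕ, i ≤ n → j ≤ n →
      |(i : ℝ) - (j : ℝ)| - α ≤ d (γ i) (γ j) ∧ d (γ i) (γ j) ≤ |(i : ℝ) - (j : ℝ)| + α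

/-- A Gromov sequence: a representative of a point of the Gromov boundary `∂X`. -/
def GromovSeq (d : X → X → ℝ) (u : ℕ → X) : Prop :=
  ∀ w : X, Tendsto (fun p : ℕ × ℕ => gp d w (u p.1) (u p.2)) atTop atTop

/-- A point of the Gromov boundary `∂X`, given by a representative Gromov sequence. -/
def BndRep (d : X → X → ℝ) := {u : ℕ → X // GromovSeq d u}

/-- The sequence `u` converges to the boundary point `p`. -/
def ConvToB (d : X → X → ℝ) (u : ℕ → X) (p : BndRep d) : Prop :=
  ∀ w : X, Tendsto (fun n => gp d w (u n) (p.1 n)) atTop atTop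

/-- The Busemann function `β_d(x,y;p) = sup { limsup_n (d(x,p_n) − d(y,p_n)) : p_n → p }`. -/
def busemann (d : X → X → ℝ) (x y : X) (p : BndRep d) : ℝ :=
  sSup {L : ℝ | ∃ u : ℕ → X, ConvToB d u p ∧
    L = Filter.limsup (fun n => d x (u n) - d y (u n)) atTop}

/-! ### Auxiliary lemmas -/

lemma my_tendsto_min_atTop {α : Type*} {l : Filter α} {f g : α → ℝ}
    (hf : Tendsto f l atTop) (hg : Tendsto g l atTop) :
    Tendsto (fun x => min (f x) (g x)) l atTop := by
  rw [tendsto_atTop] at hf hg ⊢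
  intro b
  filter_upwards [hf b, hg b] with x h1 h2
  exact le_min h1 h2

lemma my_gp_symm (d : X → X → ℝ) (hpm : IsPseudometric d) (w a b : X) :
    gp d w a b = gp d w b a := by
  unfold gp; rw [hpm.2.1 a b]; ring

/-- `d x z - d y z ≤ d x y`. -/
lemma my_diff_le (d : X → X → ℝ) (hpm : IsPseudometric d) (x y z : X) :
    d x z - d y z ≤ d x y := by
  have := hpm.2.2 x y z
  linarith

lemma my_bdd_above (d : X → X → ℝ) (hpm : IsPseudometric d) (x y : X) (u : ℕ → X) :
    IsBoundedUnder (· ≤ ·) atTop (fun n => d x (u n) - d y (u n)) :=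
  isBoundedUnder_of ⟨d x y, fun n => my_diff_le d hpm x y (u n)⟩

lemma my_bdd_below (d : X → X → ℝ) (hpm : IsPseudometric d) (x y : X) (u : ℕ → X) :
    IsBoundedUnder (· ≥ ·) atTop (fun n => d x (u n) - d y (u n)) := by
  refine isBoundedUnder_of ⟨-(d x y), fun n => ?_⟩
  have h := my_diff_le d hpm y x (u n)
  have hs := hpm.2.1 x y
  simp only [ge_iff_le]
  linarith

/-- If `u` and `v` both converge to `p`, the Gromov products `(u_n | v_m)_w` tend to `∞`. -/
lemma my_joint_gp_tendsto (d : X → X → ℝ) (δ : ℝ) (hδ : 0 ≤ δ)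
    (hpm : IsPseudometric d) (hhyp : GromovHyperbolic d δ)
    {u v : ℕ → X} {p : BndRep d} (hu : ConvToB d u p) (hv : ConvToB d v p) (w : X) :
    Tendsto (fun q : ℕ × ℕ => gp d w (u q.1) (v q.2)) atTop atTop := by
  have h1 : Tendsto (fun q : ℕ × ℕ => gp d w (u q.1) (p.1 q.1)) atTop atTop := by
    rw [← prod_atTop_atTop_eq]
    exact (hu w).comp tendsto_fst
  have h2 : Tendsto (fun q : ℕ × ℕ => gp d w (p.1 q.1) (p.1 q.2)) atTop atTop := p.2 w
  have h3 : Tendsto (fun q : ℕ × ℕ => gp d w (p.1 q.2) (v q.2)) atTop atTop := by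
    have h3' : Tendsto (fun q : ℕ × ℕ => gp d w (v q.2) (p.1 q.2)) atTop atTop := by
      rw [← prod_atTop_atTop_eq]
      exact (hv w).comp tendsto_snd
    exact h3'.congr fun q => my_gp_symm d hpm w (v q.2) (p.1 q.2)
  have hmin : Tendsto (fun q : ℕ × ℕ =>
      min (gp d w (u q.1) (p.1 q.1))
        (min (gp d w (p.1 q.1) (p.1 q.2)) (gp d w (p.1 q.2) (v q.2))) + (-(2 * δ)))
      atTop atTop :=
    tendsto_atTop_add_const_right _ _ (my_tendsto_min_atTop h1 (my_tendsto_min_atTop h2 h3))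
  refine tendsto_atTop_mono (fun q => ?_) hmin
  set A := gp d w (u q.1) (p.1 q.1)
  set B := gp d w (p.1 q.1) (p.1 q.2)
  set C := gp d w (p.1 q.2) (v q.2)
  set G := gp d w (p.1 q.1) (v q.2)
  have e1 : min A G - δ ≤ gp d w (u q.1) (v q.2) := hhyp (u q.1) (p.1 q.1) (v q.2) w
  have e2 : min B C - δ ≤ G := hhyp (p.1 q.1) (p.1 q.2) (v q.2) w
  have key : min A (min B C) ≤ min A G + δ := by
    have hA : A ≤ A + δ := by linarith
    have hG : min B C ≤ G + δ := by linarith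
    calc min A (min B C) ≤ min (A + δ) (G + δ) := min_le_min hA hG
      _ = min A G + δ := min_add_add_right A G δ
  linarith

/-- Key pointwise inequality. -/
lemma my_pointwise (d : X → X → ℝ) (δ : ℝ)
    (hpm : IsPseudometric d) (hhyp : GromovHyperbolic d δ)
    (x y a b : X) (h : d x y ≤ gp d y a b) :
    (d x b - d y b) + (d y a - d x a) ≤ 2 * δ := by
  have e := hhyp x a b y
  have ha : gp d y x a ≤ d x y := by
    unfold gp
    have t := hpm.2.2 a x y
    have hs := hpm.2.1 a x
    linarith
  have hmin : min (gp d y x a) (gp d y a b) = gp d y x a :=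
    min_eq_left (ha.trans h)
  rw [hmin] at e
  have hsa : d y a = d a y := hpm.2.1 y a
  have hsb : d y b = d b y := hpm.2.1 y b
  unfold gp at e
  linarith

/-- Any boundary representative converges to its own boundary point. -/
lemma my_self_conv (d : X → X → ℝ) (p : BndRep d) : ConvToB d p.1 p := by
  intro w
  have hd : Tendsto (fun n : ℕ => ((n, n) : ℕ × ℕ)) atTop atTop := by
    rw [← prod_atTop_atTop_eq]
    exact tendsto_id.prodMk tendsto_id
  have := (p.2 w).comp hd
  exact this.congr fun n => rfl

/-- In a `δ`-hyperbolic pseudometric space,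
`|β_d(x,y;p) + β_d(y,x;p)| ≤ 8δ`. -/
theorem busemann_almost_antisymmetric (d : X → X → ℝ) (δ : ℝ) (hδ : 0 ≤ δ)
    (hpm : IsPseudometric d) (hhyp : GromovHyperbolic d δ) :
    ∀ (x y : X) (p : BndRep d),
      |busemann d x y p + busemann d y x p| ≤ 8 * δ := by
  intro x y p
  set S1 : Set ℝ := {L : ℝ | ∃ u : ℕ → X, ConvToB d u p ∧
    L = Filter.limsup (fun n => d x (u n) - d y (u n)) atTop} with hS1
  set S2 : Set ℝ := {L : ℝ | ∃ u : ℕ → X, ConvToB d u p ∧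
    L = Filter.limsup (fun n => d y (u n) - d x (u n)) atTop} with hS2
  have hp : ConvToB d p.1 p := my_self_conv d p
  have hne1 : S1.Nonempty :=
    ⟨_, p.1, hp, rfl⟩
  have hne2 : S2.Nonempty :=
    ⟨_, p.1, hp, rfl⟩
  have hbd1 : BddAbove S1 := by
    refine ⟨d x y, fun L hL => ?_⟩
    obtain ⟨u, -, rfl⟩ := hL
    exact limsup_le_of_le ((my_bdd_below d hpm x y u).isCoboundedUnder_le)
      (Eventually.of_forall fun n => my_diff_le d hpm x y (u n))
  have hbd2 : BddAbove S2 := by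
    refine ⟨d y x, fun L hL => ?_⟩
    obtain ⟨u, -, rfl⟩ := hL
    exact limsup_le_of_le ((my_bdd_below d hpm y x u).isCoboundedUnder_le)
      (Eventually.of_forall fun n => my_diff_le d hpm y x (u n))
  -- key upper bound on sums of elements
  have hkey : ∀ L1 ∈ S1, ∀ L2 ∈ S2, L1 + L2 ≤ 2 * δ := by
    rintro L1 ⟨u, hu, rfl⟩ L2 ⟨v, hv, rfl⟩
    have hjoint := my_joint_gp_tendsto d δ hδ hpm hhyp hv hu y
    have hev : ∀ᶠ q : ℕ × ℕ in atTop, d x y ≤ gp d y (v q.1) (u q.2) :=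
      hjoint.eventually_ge_atTop (d x y)
    rw [eventually_atTop] at hev
    obtain ⟨a, ha⟩ := hev
    have hstep : ∀ m ≥ a.1,
        Filter.limsup (fun n => d x (u n) - d y (u n)) atTop ≤
          2 * δ - (d y (v m) - d x (v m)) := by
      intro m hm
      refine limsup_le_of_le ((my_bdd_below d hpm x y u).isCoboundedUnder_le) ?_
      rw [eventually_atTop]
      refine ⟨a.2, fun n hn => ?_⟩
      have hg : d x y ≤ gp d y (v m) (u n) := ha (m, n) ⟨hm, hn⟩
      have := my_pointwise d δ hpm hhyp x y (v m) (u n) hg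
      linarith
    have hfin : Filter.limsup (fun m => d y (v m) - d x (v m)) atTop ≤
        2 * δ - Filter.limsup (fun n => d x (u n) - d y (u n)) atTop := by
      refine limsup_le_of_le ((my_bdd_below d hpm y x v).isCoboundedUnder_le) ?_
      rw [eventually_atTop]
      exact ⟨a.1, fun m hm => by linarith [hstep m hm]⟩
    linarith
  -- upper bound on the sum of sups
  have hub : sSup S1 + sSup S2 ≤ 2 * δ := by
    have h2 : ∀ L2 ∈ S2, L2 ≤ 2 * δ - sSup S1 := by
      intro L2 hL2
      have : sSup S1 ≤ 2 * δ - L2 :=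
        csSup_le hne1 fun L1 hL1 => by linarith [hkey L1 hL1 L2 hL2]
      linarith
    have := csSup_le hne2 h2
    linarith
  -- lower bound
  have hlb : 0 ≤ sSup S1 + sSup S2 := by
    set f : ℕ → ℝ := fun n => d x (p.1 n) - d y (p.1 n) with hf
    have hL1 : Filter.limsup f atTop ∈ S1 := ⟨p.1, hp, rfl⟩
    have hL2 : (0 : ℝ) - Filter.liminf f atTop ∈ S2 := by
      refine ⟨p.1, hp, ?_⟩
      have := limsup_const_sub atTop f (0 : ℝ)
        ((my_bdd_above d hpm x y p.1).isCoboundedUnder_ge)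
        (my_bdd_below d hpm x y p.1)
      rw [← this]
      apply Filter.limsup_congr
      refine Eventually.of_forall fun n => ?_
      simp [hf]
    have hll : Filter.liminf f atTop ≤ Filter.limsup f atTop :=
      liminf_le_limsup (my_bdd_above d hpm x y p.1) (my_bdd_below d hpm x y p.1)
    have g1 : Filter.limsup f atTop ≤ sSup S1 := le_csSup hbd1 hL1
    have g2 : (0 : ℝ) - Filter.liminf f atTop ≤ sSup S2 := le_csSup hbd2 hL2
    linarith
  have hb1 : busemann d x y p = sSup S1 := rfl
  have hb2 : busemann d y x p = sSup S2 := rfl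
  rw [hb1, hb2, abs_le]
  constructor <;> linarith

end
end

section
/- For any λ1, λ2 > 0 and ε, δ ≥ 0 there exists α = α(λ1,λ2,ε,δ) ≥ 0 such that every (λ1,λ2,ε)-quasigeodesic and δ-hyperbolic metric space is α-rough geodesic. -/
/-!
Along a discrete quasigeodesic `γ` from `x` to `y` the Gromov product `(x|y)_{γ k}` is bounded
uniformly (Morse lemma). For points `p`, `q` with small `(x|y)_p`, `(x|y)_q`, the distance
`d p q` is `|(p|y)_x - (q|y)_x|` up to a constant, so choosing for each integer `k ≤ d x y` a
point of `γ` whose projection `(γ i|y)_x` is within `λ2 + ε` of `k` yields a rough geodesic.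

For the Morse bound take `k` maximising `(x|y)_{γ k}`. If the maximum is large, the `S` steps
on either side of `k` stay deep, and iterating the four-point condition along chains of at most
`2 ^ K` points (at a cost of `K δ`) makes `d (γ k) x` a rough maximum of `d (γ ·) x` on that
window. A rough interior maximum of the distance to a point is impossible on a long
quasigeodesic window. Since the loss `K δ` is logarithmic in the window length, `S` can be
chosen.
-/

open Filter Set MeasureTheory Topology

noncomputable section

variable {X : Type*}

/-- A `(λ1,λ2,ε)`-quasigeodesic space: any two points are joined by a discrete
`(λ1,λ2,ε)`-quasigeodesic. -/
def QuasigeodesicSpace (d : X → X → ℝ) (l1 l2 e : ℝ) : Prop :=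
  ∀ x y : X, ∃ (n : ℕ) (γ : ℕ → X), γ 0 = x ∧ γ n = y ∧
    ∀ i j : ℕ, i ≤ n → j ≤ n →
      |(i : ℝ) - (j : ℝ)| / l1 - e ≤ d (γ i) (γ j) ∧
        d (γ i) (γ j) ≤ l2 * |(i : ℝ) - (j : ℝ)| + e

theorem exists_last_of_not {P : ℕ → Prop} {a k : ℕ} (hk : ¬P k) (h : ∃ l, a ≤ l ∧ l ≤ k ∧ P l) :
    ∃ i, a ≤ i ∧ i < k ∧ P i ∧ ∀ l, i < l → l ≤ k → ¬P l := by
  classical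
  obtain ⟨l, hal, hlk, hl⟩ := h
  have hi := Nat.findGreatest_spec hlk hl
  refine ⟨Nat.findGreatest P k, hal.trans (Nat.le_findGreatest hlk hl),
    (Nat.findGreatest_le k).lt_of_ne fun h => hk (h ▸ hi), hi,
    fun l h1 h2 => Nat.findGreatest_is_greatest h1 h2⟩

theorem exists_first_of_not {P : ℕ → Prop} {k b : ℕ} (hk : ¬P k) (h : ∃ l, k ≤ l ∧ l ≤ b ∧ P l) :
    ∃ j, k < j ∧ j ≤ b ∧ P j ∧ ∀ l, k ≤ l → l < j → ¬P l := by
  classical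
  have hex : ∃ l, k ≤ l ∧ P l := h.imp fun l hl => ⟨hl.1, hl.2.2⟩
  obtain ⟨hkj, hj⟩ := Nat.find_spec hex
  obtain ⟨l, hkl, hlb, hl⟩ := h
  refine ⟨Nat.find hex, hkj.lt_of_ne fun h => hk (h ▸ hj), (Nat.find_min' hex ⟨hkl, hl⟩).trans hlb,
    hj, fun l h1 h2 hl => Nat.find_min hex h2 ⟨h1, hl⟩⟩

theorem exists_mem_Icc_of_step_le {t : ℕ → ℝ} {M v : ℝ} (hM : 0 ≤ M) {n : ℕ} (h0 : t 0 ≤ v)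
    (hn : v ≤ t n) (hstep : ∀ i < n, t (i + 1) ≤ t i + M) : ∃ i ≤ n, t i ∈ Set.Icc v (v + M) := by
  induction n with
  | zero => exact ⟨0, le_rfl, hn, by linarith⟩
  | succ n ih =>
    by_cases hv : v ≤ t n
    · obtain ⟨i, hi, h⟩ := ih hv fun i hi => hstep i (by omega)
      exact ⟨i, by omega, h⟩
    · exact ⟨n + 1, le_rfl, hn, by linarith [hstep n (by omega)]⟩

theorem deep_window_of_lipschitz {P : ℕ → ℝ} {M : ℝ} (hM : 0 ≤ M) {n t S : ℕ}
    (hlip : ∀ i j, i ≤ j → j ≤ n →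
      P i ≤ P j + M * ((j : ℝ) - i) ∧ P j ≤ P i + M * ((j : ℝ) - i))
    (h0 : P 0 ≤ 0) (hn : P n ≤ 0) (ht : t ≤ n) (hbig : M * S < P t) :
    S ≤ t ∧ t + S ≤ n ∧ ∀ l, t ≤ l + S → l ≤ t + S → P t - M * S ≤ P l := by
  have hSt : S ≤ t := by
    by_contra! h
    have h1 := (hlip 0 t (Nat.zero_le t) ht).2
    have h2 : M * (t : ℝ) ≤ M * S := mul_le_mul_of_nonneg_left (by exact_mod_cast h.le) hM
    push_cast at h1
    linarith
  have htS : t + S ≤ n := by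
    by_contra! h
    have h1 := (hlip t n ht le_rfl).1
    have h2 : M * ((n : ℝ) - t) ≤ M * S := mul_le_mul_of_nonneg_left (by
      have : (n : ℝ) ≤ t + S := by exact_mod_cast h.le
      linarith) hM
    linarith
  refine ⟨hSt, htS, fun l h1 h2 => ?_⟩
  rcases le_total l t with h | h
  · have h3 : M * ((t : ℝ) - l) ≤ M * S := mul_le_mul_of_nonneg_left (by
      have : (t : ℝ) ≤ l + S := by exact_mod_cast h1
      linarith) hM
    linarith [(hlip l t h ht).2]
  · have h3 : M * ((l : ℝ) - t) ≤ M * S := mul_le_mul_of_nonneg_left (by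
      have : (l : ℝ) ≤ t + S := by exact_mod_cast h2
      linarith) hM
    linarith [(hlip t l h (by omega)).1]

theorem exists_lt_and_two_mul_le_two_pow (A B : ℝ) : ∃ K S : ℕ, A + B * K < S ∧ 2 * S ≤ 2 ^ K := by
  have hlim : Tendsto (fun K : ℕ => (2 * |A| + 2) * (1 / 2) ^ K + 2 * |B| * ((K : ℝ) ^ 1 / 2 ^ K))
      atTop (𝓝 0) := by
    simpa using ((tendsto_pow_atTop_nhds_zero_of_lt_one (by norm_num : (0 : ℝ) ≤ 1 / 2)
      (by norm_num)).const_mul (2 * |A| + 2)).add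
      ((tendsto_pow_const_div_const_pow_of_one_lt 1 one_lt_two).const_mul (2 * |B|))
  obtain ⟨K, hK⟩ := (hlim.eventually (gt_mem_nhds one_pos)).exists
  have hpow : (0 : ℝ) < 2 ^ K := by positivity
  have hK' : 2 * |A| + 2 + 2 * |B| * K < 2 ^ K := by
    rw [one_div, inv_pow, pow_one] at hK
    field_simp at hK
    linarith
  refine ⟨K, ⌊A + B * K⌋₊ + 1, by push_cast; exact Nat.lt_floor_add_one _, ?_⟩
  have hfloor : (⌊A + B * K⌋₊ : ℝ) ≤ |A| + |B| * K := by
    have hle : A + B * K ≤ |A| + |B| * K :=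
      add_le_add (le_abs_self A) (mul_le_mul_of_nonneg_right (le_abs_self B) K.cast_nonneg)
    exact (Nat.cast_le.mpr (Nat.floor_le_floor hle)).trans (Nat.floor_le (by positivity))
  exact_mod_cast (show (2 * (⌊A + B * K⌋₊ + 1 : ℕ) : ℝ) ≤ 2 ^ K by push_cast; linarith)

variable {d : X → X → ℝ}

namespace IsPseudometric

variable (hd : IsPseudometric d)
include hd

theorem dist_self (x : X) : d x x = 0 := hd.1 x

theorem dist_comm (x y : X) : d x y = d y x := hd.2.1 x y

theorem dist_triangle (x y z : X) : d x z ≤ d x y + d y z := hd.2.2 x y z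

theorem dist_nonneg (x y : X) : 0 ≤ d x y := by
  linarith [hd.dist_triangle x y x, hd.dist_comm y x, hd.dist_self x]

theorem gp_comm (w x y : X) : gp d w x y = gp d w y x := by
  unfold gp
  rw [hd.dist_comm x y]
  ring

theorem gp_self (w x : X) : gp d w x x = d x w := by
  unfold gp
  rw [hd.dist_self]
  ring

theorem gp_base_left (w y : X) : gp d w w y = 0 := by
  unfold gp
  rw [hd.dist_self, hd.dist_comm y w]
  ring

theorem gp_base_right (w x : X) : gp d w x w = 0 := by
  unfold gp
  rw [hd.dist_self]
  ring

theorem gp_le_gp_add_dist (w x x' y : X) : gp d w x y ≤ gp d w x' y + d x x' := by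
  unfold gp
  linarith [hd.dist_triangle x x' w, hd.dist_triangle x' x y, hd.dist_comm x' x]

theorem gp_le_gp_add_dist_base (w w' x y : X) : gp d w x y ≤ gp d w' x y + d w w' := by
  unfold gp
  linarith [hd.dist_triangle x w' w, hd.dist_triangle y w' w, hd.dist_comm w' w]

theorem gp_add_gp (w p y : X) : gp d w p y + gp d p w y = d p w := by
  unfold gp
  linarith [hd.dist_comm w p, hd.dist_comm y p, hd.dist_comm y w]

theorem abs_gp_sub_gp_le (x y p q : X) : |gp d x p y - gp d x q y| ≤ d p q :=
  abs_sub_le_iff.mpr ⟨by linarith [hd.gp_le_gp_add_dist x p q y],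
    by linarith [hd.gp_le_gp_add_dist x q p y, hd.dist_comm q p]⟩

end IsPseudometric

theorem dist_eq_sub_two_mul_gp (d : X → X → ℝ) (w x y : X) :
    d x y = d x w + d y w - 2 * gp d w x y := by
  unfold gp
  ring

namespace GromovHyperbolic

variable {δ : ℝ} (hhyp : GromovHyperbolic d δ)
include hhyp

section

variable (hδ : 0 ≤ δ)
include hδ

theorem sub_mul_le_gp_of_chain (w : X) (u : ℕ → X) (m : ℝ) (K : ℕ) :
    ∀ i j, i < j → j - i ≤ 2 ^ K → (∀ l, i ≤ l → l < j → m ≤ gp d w (u l) (u (l + 1))) →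
      m - δ * K ≤ gp d w (u i) (u j) := by
  induction K with
  | zero =>
    intro i j hij hK hm
    obtain rfl : j = i + 1 := by rw [pow_zero] at hK; omega
    simpa using hm i le_rfl (by omega)
  | succ K ih =>
    intro i j hij hK hm
    rcases Nat.lt_or_ge (j - i) 2 with hj | hj
    · obtain rfl : j = i + 1 := by omega
      have hstep := hm i le_rfl (by omega)
      have hδK : 0 ≤ δ * (K + 1 : ℕ) := by positivity
      linarith
    · rw [pow_succ] at hK
      have hleft := ih i ((i + j) / 2) (by omega) (by omega) fun l h1 h2 => hm l h1 (by omega)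
      have hright := ih ((i + j) / 2) j (by omega) (by omega) fun l h1 h2 => hm l (by omega) h2
      have hfour := hhyp (u i) (u ((i + j) / 2)) (u j) w
      have hmin := le_min hleft hright
      push_cast
      linarith

theorem sub_le_gp_of_le_dist (hd : IsPseudometric d) {M B : ℝ} (hM : 0 ≤ M) {w : X}
    {u : ℕ → X} {K i j : ℕ} (hij : i ≤ j) (hK : j - i ≤ 2 ^ K)
    (hstep : ∀ l, i ≤ l → l < j → d (u l) (u (l + 1)) ≤ M)
    (hB : ∀ l, i ≤ l → l ≤ j → B ≤ d (u l) w) :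
    B - M / 2 - δ * K ≤ gp d w (u i) (u j) := by
  rcases hij.eq_or_lt with rfl | hij
  · rw [hd.gp_self]
    linarith [hB i le_rfl le_rfl, mul_nonneg hδ K.cast_nonneg]
  · refine hhyp.sub_mul_le_gp_of_chain hδ w u _ K i j hij hK fun l hil hlj => ?_
    unfold gp
    linarith [hstep l hil hlj, hB l hil hlj.le, hB (l + 1) (by omega) hlj]

theorem dist_le_dist_add_of_gp_peak (hd : IsPseudometric d) {M h : ℝ} (hM : 0 ≤ M)
    {u : ℕ → X} {x y : X} {a k b K : ℕ} (hak : a ≤ k) (hkb : k ≤ b) (hK : b - a ≤ 2 ^ K)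
    (hstep : ∀ l, a ≤ l → l < b → d (u l) (u (l + 1)) ≤ M) (hh : M / 2 + δ * K + 2 * δ < h)
    (hP : ∀ l, a ≤ l → l ≤ b → h ≤ gp d (u l) x y ∧ gp d (u l) x y ≤ gp d (u k) x y)
    {l : ℕ} (hal : a ≤ l) (hlb : l ≤ b) :
    d (u l) x ≤ d (u k) x + δ := by
  obtain ⟨l₀, hl₀, hmin⟩ :=
    (Finset.Icc a b).exists_min_image (fun l => d (u l) x)
      ⟨a, Finset.mem_Icc.mpr ⟨le_rfl, by omega⟩⟩
  rw [Finset.mem_Icc] at hl₀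
  have hdeep : ∀ l, a ≤ l → l ≤ b → d (u l₀) x - M / 2 - δ * K ≤ gp d x (u l) (u k) := by
    intro l hal hlb
    have hB : ∀ l', a ≤ l' → l' ≤ b → d (u l₀) x ≤ d (u l') x :=
      fun l' h1 h2 => hmin l' (Finset.mem_Icc.mpr ⟨h1, h2⟩)
    rcases le_total l k with hlk | hkl
    · exact hhyp.sub_le_gp_of_le_dist hδ hd hM hlk (by omega)
        (fun l' h1 h2 => hstep l' (by omega) (by omega)) fun l' h1 h2 => hB l' (by omega) (by omega)
    · rw [hd.gp_comm]
      exact hhyp.sub_le_gp_of_le_dist hδ hd hM hkl (by omega)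
        (fun l' h1 h2 => hstep l' (by omega) (by omega)) fun l' h1 h2 => hB l' (by omega) (by omega)
  -- `d (u l) x = gp d x (u l) y + gp d (u l) x y`; the second summand is largest at `k`, and the
  -- four-point condition through the deep point `u k` bounds the first by its value at `k` plus `δ`
  have hsplit : ∀ l, gp d x (u l) y + gp d (u l) x y = d (u l) x :=
    fun l => hd.gp_add_gp x (u l) y
  have hlow : gp d x (u k) y - δ ≤ gp d x (u l₀) y := by
    have h4 := hhyp (u l₀) (u k) y x
    rcases min_le_iff.mp (show _ ≤ gp d x (u l₀) y + δ by linarith) with h' | h'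
    · linarith [hdeep l₀ hl₀.1 hl₀.2, hsplit l₀, (hP l₀ hl₀.1 hl₀.2).1]
    · linarith
  have hup : gp d x (u l) y - δ ≤ gp d x (u k) y := by
    have h4 := hhyp (u k) (u l) y x
    rcases min_le_iff.mp (show _ ≤ gp d x (u k) y + δ by linarith) with h' | h'
    · rw [hd.gp_comm] at h'
      linarith [hdeep l hal hlb, hsplit l₀, (hP l₀ hl₀.1 hl₀.2).1]
    · linarith
  linarith [hsplit l, hsplit k, (hP l hal hlb).2]

theorem sub_le_mul_of_le_dist (hd : IsPseudometric d) {l1 e M B : ℝ} (hl1 : 0 ≤ l1)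
    (hM : 0 ≤ M) {u : ℕ → X} {w : X} {K i j : ℕ} (hij : i ≤ j) (hK : j - i ≤ 2 ^ K)
    (hlow : (j : ℝ) - i ≤ l1 * (d (u i) (u j) + e))
    (hstep : ∀ l, i ≤ l → l < j → d (u l) (u (l + 1)) ≤ M)
    (hB : ∀ l, i ≤ l → l ≤ j → B ≤ d (u l) w) :
    (j : ℝ) - i ≤ l1 * (d (u i) w + d (u j) w - 2 * B + M + 2 * (δ * K) + e) := by
  have hgp := hhyp.sub_le_gp_of_le_dist hδ hd hM hij hK hstep hB
  refine hlow.trans (mul_le_mul_of_nonneg_left ?_ hl1)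
  rw [dist_eq_sub_two_mul_gp d w]
  linarith

theorem min_sub_le_of_dist_le_dist_add (hd : IsPseudometric d) {l1 e M r : ℝ} (hl1 : 0 ≤ l1)
    (he : 0 ≤ e) (hM : 0 ≤ M) {u : ℕ → X} {w : X} {n a k b K : ℕ} (hak : a ≤ k) (hkb : k ≤ b)
    (hbn : b ≤ n) (hK : b - a ≤ 2 ^ K)
    (hlow : ∀ i j, i ≤ j → j ≤ n → (j : ℝ) - i ≤ l1 * (d (u i) (u j) + e))
    (hstep : ∀ i j, i ≤ j → j ≤ n → d (u i) (u j) ≤ M * ((j : ℝ) - i))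
    (hpeak : ∀ l, a ≤ l → l ≤ b → d (u l) w ≤ d (u k) w + δ)
    (hr : M * l1 * (3 * M + 2 * (δ * K) + e) < 2 * r) :
    min ((k : ℝ) - a) ((b : ℝ) - k) ≤ l1 * (2 * r + M + 2 * (δ * K) + δ + e) := by
  set f : ℕ → ℝ := fun l => d (u l) w
  have hlip : ∀ i j, i ≤ j → j ≤ n →
      f i ≤ f j + M * ((j : ℝ) - i) ∧ f j ≤ f i + M * ((j : ℝ) - i) := fun i j hij hjn =>
    ⟨by linarith [hd.dist_triangle (u i) (u j) w, hstep i j hij hjn],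
      by linarith [hd.dist_triangle (u j) (u i) w, hd.dist_comm (u j) (u i), hstep i j hij hjn]⟩
  have hlip₁ : ∀ l, l + 1 ≤ n → f l ≤ f (l + 1) + M ∧ f (l + 1) ≤ f l + M :=
    fun l hl => by simpa using hlip l (l + 1) (by omega) hl
  have hplateau : ∀ i j, a ≤ i → i ≤ j → j ≤ b → ∀ B, (∀ l, i ≤ l → l ≤ j → B ≤ f l) →
      (j : ℝ) - i ≤ l1 * (f i + f j - 2 * B + M + 2 * (δ * K) + e) :=
    fun i j hai hij hjb B hB => hhyp.sub_le_mul_of_le_dist hδ hd hl1 hM hij (by omega)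
      (hlow i j hij (by omega)) (fun l _ hl => by simpa using hstep l (l + 1) (by omega) (by omega))
      hB
  -- Either `f` stays above `f k - r` on one side of `k`, and that side is short, or it drops
  -- below on both sides; the last drop before `k` and the first one after it are then close
  -- in `X` but at least `2 r / M` apart in parameter.
  by_cases hleft : ∀ l, a ≤ l → l ≤ k → f k - r < f l
  · refine (min_le_left _ _).trans ((hplateau a k le_rfl hak hkb _ fun l h1 h2 =>
      (hleft l h1 h2).le).trans (mul_le_mul_of_nonneg_left ?_ hl1))
    linarith [hpeak a le_rfl (by omega)]
  by_cases hright : ∀ l, k ≤ l → l ≤ b → f k - r < f l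
  · refine (min_le_right _ _).trans ((hplateau k b hak hkb le_rfl _ fun l h1 h2 =>
      (hright l h1 h2).le).trans (mul_le_mul_of_nonneg_left ?_ hl1))
    linarith [hpeak b (by omega) le_rfl]
  exfalso
  push Not at hleft hright
  have hr₀ : 0 < r := by nlinarith [mul_nonneg hM hl1, mul_nonneg hδ K.cast_nonneg]
  obtain ⟨i, hai, hik, hfi, hi⟩ :=
    exists_last_of_not (P := fun l => f l ≤ f k - r) (by simpa using hr₀) hleft
  obtain ⟨j, hkj, hjb, hfj, hj⟩ :=
    exists_first_of_not (P := fun l => f l ≤ f k - r) (by simpa using hr₀) hright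
  have hB : ∀ l, i ≤ l → l ≤ j → f k - r - M ≤ f l := by
    intro l hil hlj
    rcases hil.eq_or_lt with hil | hil
    · rw [← hil]
      linarith [hlip₁ i (by omega), not_le.mp (hi (i + 1) (by omega) (by omega))]
    rcases hlj.eq_or_lt with hlj | hlj
    · obtain ⟨j', rfl⟩ : ∃ j', j = j' + 1 := ⟨j - 1, by omega⟩
      rw [hlj]
      linarith [hlip₁ j' (by omega), not_le.mp (hj j' (by omega) (by omega))]
    rcases le_total l k with hlk | hkl
    · linarith [not_le.mp (hi l hil hlk)]
    · linarith [not_le.mp (hj l hkl hlj)]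
  have hji : (j : ℝ) - i ≤ l1 * (3 * M + 2 * (δ * K) + e) :=
    (hplateau i j hai (by omega) hjb _ hB).trans (mul_le_mul_of_nonneg_left (by linarith) hl1)
  have hki : r ≤ M * ((k : ℝ) - i) := by linarith [(hlip i k hik.le (by omega)).2]
  have hjk : r ≤ M * ((j : ℝ) - k) := by linarith [(hlip k j hkj.le (by omega)).1]
  nlinarith [mul_le_mul_of_nonneg_left hji hM]

end

theorem dist_le_abs_gp_sub_gp_add (hd : IsPseudometric d) {x y p q : X} {c : ℝ}
    (hp : gp d p x y ≤ c) (hq : gp d q x y ≤ c) :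
    d p q ≤ |gp d x p y - gp d x q y| + 2 * c + 2 * δ := by
  have hfour := hhyp p y q x
  rw [hd.gp_comm x y q] at hfour
  linarith [dist_eq_sub_two_mul_gp d x p q, hd.gp_add_gp x p y, hd.gp_add_gp x q y,
    min_add_max (gp d x p y) (gp d x q y), max_sub_min_eq_abs' (gp d x p y) (gp d x q y)]

theorem roughGeodesic_of_forall_exists_gp_le (hd : IsPseudometric d) {c C : ℝ} (hc : 0 ≤ c)
    (hC : 0 ≤ C)
    (h : ∀ x y : X, ∀ k : ℕ, (k : ℝ) ≤ d x y → ∃ p, gp d p x y ≤ c ∧ |gp d x p y - k| ≤ C) :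
    RoughGeodesic d (2 * (C + 1) + 2 * c + 2 * δ) := by
  intro x y
  have hD := hd.dist_nonneg x y
  have hp : ∀ k : ℕ, ∃ p : X, (k : ℝ) ≤ d x y → gp d p x y ≤ c ∧ |gp d x p y - k| ≤ C := by
    intro k
    by_cases hk : (k : ℝ) ≤ d x y
    · exact (h x y k hk).imp fun _ hp _ => hp
    · exact ⟨x, fun h => absurd h hk⟩
  choose p hp using hp
  set m := ⌊d x y⌋₊ + 1
  set γ : ℕ → X := fun k => if k = 0 then x else if k < m then p k else y
  have hγ : ∀ k ≤ m, gp d (γ k) x y ≤ c ∧ |gp d x (γ k) y - k| ≤ C + 1 := by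
    intro k hk
    by_cases h0 : k = 0
    · simp only [γ, h0, if_true, hd.gp_base_left, Nat.cast_zero, sub_zero, abs_zero]
      exact ⟨hc, by linarith⟩
    by_cases hkm : k < m
    · obtain ⟨h1, h2⟩ := hp k ((Nat.le_floor_iff hD).mp (by omega))
      simp only [γ, if_neg h0, if_pos hkm]
      exact ⟨h1, by linarith⟩
    · obtain rfl : k = m := by omega
      simp only [γ, if_neg h0, lt_irrefl, if_false, hd.gp_base_right, hd.gp_self, hd.dist_comm y x]
      refine ⟨hc, abs_le.mpr ⟨?_, ?_⟩⟩
      · linarith [Nat.floor_le hD, show (m : ℝ) = ⌊d x y⌋₊ + 1 by simp [m]]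
      · linarith [Nat.lt_floor_add_one (d x y), show (m : ℝ) = ⌊d x y⌋₊ + 1 by simp [m]]
  refine ⟨m, γ, by simp [γ], by simp [γ, m], fun i j hi hj => ?_⟩
  obtain ⟨hi1, hi2⟩ := hγ i hi
  obtain ⟨hj1, hj2⟩ := hγ j hj
  have hlow := hd.abs_gp_sub_gp_le x y (γ i) (γ j)
  have hup := hhyp.dist_le_abs_gp_sub_gp_add hd hi1 hj1
  have hshift := abs_le.mp (abs_abs_sub_abs_le (gp d x (γ i) y - gp d x (γ j) y) ((i : ℝ) - j))
  have hsum := abs_sub (gp d x (γ i) y - i) (gp d x (γ j) y - j)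
  rw [show gp d x (γ i) y - gp d x (γ j) y - (i - j) = gp d x (γ i) y - i - (gp d x (γ j) y - j)
    by ring] at hshift
  constructor <;> linarith [hshift.1, hshift.2]

end GromovHyperbolic

def IsQuasigeodesic (d : X → X → ℝ) (l1 l2 e : ℝ) (n : ℕ) (γ : ℕ → X) : Prop :=
  ∀ i j : ℕ, i ≤ n → j ≤ n →
    |(i : ℝ) - (j : ℝ)| / l1 - e ≤ d (γ i) (γ j) ∧ d (γ i) (γ j) ≤ l2 * |(i : ℝ) - (j : ℝ)| + e

namespace IsQuasigeodesic

variable {l1 l2 e : ℝ} {n : ℕ} {γ : ℕ → X} (hγ : IsQuasigeodesic d l1 l2 e n γ)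
include hγ

theorem sub_le_mul (hl1 : 0 < l1) {i j : ℕ} (hij : i ≤ j) (hjn : j ≤ n) :
    (j : ℝ) - i ≤ l1 * (d (γ i) (γ j) + e) := by
  have h := (hγ i j (hij.trans hjn) hjn).1
  rw [abs_sub_comm, abs_of_nonneg (sub_nonneg.mpr (Nat.cast_le.mpr hij))] at h
  exact (div_le_iff₀' hl1).mp (by linarith)

theorem dist_le_mul (hd : IsPseudometric d) (he : 0 ≤ e) {i j : ℕ} (hij : i ≤ j) (hjn : j ≤ n) :
    d (γ i) (γ j) ≤ (l2 + e) * ((j : ℝ) - i) := by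
  rcases hij.eq_or_lt with rfl | hij
  · simp [hd.dist_self]
  have h := (hγ i j (hij.le.trans hjn) hjn).2
  rw [abs_sub_comm, abs_of_nonneg (sub_nonneg.mpr (Nat.cast_le.mpr hij.le))] at h
  have h1 : (1 : ℝ) ≤ j - i := by
    have : (i : ℝ) + 1 ≤ j := by exact_mod_cast hij
    linarith
  nlinarith

theorem dist_succ_le (hd : IsPseudometric d) (he : 0 ≤ e) {i : ℕ} (hi : i < n) :
    d (γ i) (γ (i + 1)) ≤ l2 + e := by
  simpa using hγ.dist_le_mul hd he (Nat.le_succ i) hi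

theorem gp_succ_le (hd : IsPseudometric d) (he : 0 ≤ e) (w y : X) {i : ℕ} (hi : i < n) :
    gp d w (γ (i + 1)) y ≤ gp d w (γ i) y + (l2 + e) := by
  linarith [hd.gp_le_gp_add_dist w (γ (i + 1)) (γ i) y, hd.dist_comm (γ (i + 1)) (γ i),
    hγ.dist_succ_le hd he hi]

theorem gp_le {δ : ℝ} (hd : IsPseudometric d) (hhyp : GromovHyperbolic d δ) (hδ : 0 ≤ δ)
    (hl1 : 0 < l1) (hl2 : 0 ≤ l2) (he : 0 ≤ e) {K S : ℕ} {r : ℝ}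
    (hr : (l2 + e) * l1 * (3 * (l2 + e) + 2 * (δ * K) + e) < 2 * r)
    (hS : l1 * (2 * r + (l2 + e) + 2 * (δ * K) + δ + e) < S) (hK : 2 * S ≤ 2 ^ K)
    {k : ℕ} (hk : k ≤ n) :
    gp d (γ k) (γ 0) (γ n) ≤ (l2 + e) * S + (l2 + e) / 2 + δ * K + 2 * δ := by
  set M := l2 + e
  have hM : 0 ≤ M := add_nonneg hl2 he
  have hstep := fun i j (hij : i ≤ j) (hjn : j ≤ n) => hγ.dist_le_mul hd he hij hjn
  set P : ℕ → ℝ := fun l => gp d (γ l) (γ 0) (γ n)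
  have hlip : ∀ i j, i ≤ j → j ≤ n →
      P i ≤ P j + M * ((j : ℝ) - i) ∧ P j ≤ P i + M * ((j : ℝ) - i) := fun i j hij hjn =>
    ⟨by linarith [hd.gp_le_gp_add_dist_base (γ i) (γ j) (γ 0) (γ n), hstep i j hij hjn],
      by linarith [hd.gp_le_gp_add_dist_base (γ j) (γ i) (γ 0) (γ n), hd.dist_comm (γ j) (γ i),
        hstep i j hij hjn]⟩
  obtain ⟨t, ht, hmax⟩ := (Finset.range (n + 1)).exists_max_image P ⟨0, by simp⟩
  replace hmax : ∀ l ≤ n, P l ≤ P t := fun l hl => hmax l (Finset.mem_range.mpr (by omega))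
  by_contra! hbig
  replace hbig := hbig.trans_le (hmax k hk)
  have hδK : 0 ≤ δ * K := mul_nonneg hδ K.cast_nonneg
  obtain ⟨hSt, htS, hdeep⟩ := deep_window_of_lipschitz (S := S) hM hlip
    (by simp [P, hd.gp_base_left]) (by simp [P, hd.gp_base_right])
    (Nat.lt_succ_iff.mp (Finset.mem_range.mp ht)) (by linarith)
  obtain ⟨a, rfl⟩ := Nat.exists_eq_add_of_le' hSt
  have hpeak : ∀ l, a ≤ l → l ≤ a + S + S → d (γ l) (γ 0) ≤ d (γ (a + S)) (γ 0) + δ :=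
    fun l h1 h2 => hhyp.dist_le_dist_add_of_gp_peak hδ hd hM (u := γ) (y := γ n) (K := K)
      (by omega) (by omega) (by omega) (fun l _ hl => hγ.dist_succ_le hd he (by omega))
      (by linarith) (fun l h1 h2 => ⟨hdeep l (by omega) h2, hmax l (by omega)⟩) h1 h2
  have hwin := hhyp.min_sub_le_of_dist_le_dist_add hδ hd hl1.le he hM (K := K) (by omega)
    (by omega) htS (by omega) (fun i j hij hjn => hγ.sub_le_mul hl1 hij hjn) hstep hpeak hr
  push_cast at hwin
  rw [add_sub_cancel_left, add_sub_cancel_left, min_self] at hwin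
  linarith

end IsQuasigeodesic

universe u

theorem exists_gp_le_of_isQuasigeodesic (l1 l2 e δ : ℝ) (hl1 : 0 < l1) (hl2 : 0 ≤ l2)
    (he : 0 ≤ e) (hδ : 0 ≤ δ) :
    ∃ c : ℝ, 0 ≤ c ∧ ∀ {Y : Type u} {d : Y → Y → ℝ}, IsPseudometric d → GromovHyperbolic d δ →
      ∀ {n : ℕ} {γ : ℕ → Y}, IsQuasigeodesic d l1 l2 e n γ → ∀ k ≤ n,
        gp d (γ k) (γ 0) (γ n) ≤ c := by
  set M := l2 + e
  -- for the `r` below, the bound on `S` required by `IsQuasigeodesic.gp_le` is affine in `K`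
  obtain ⟨K, S, hS, hK⟩ := exists_lt_and_two_mul_le_two_pow
    (l1 * (M * l1 * (3 * M + e) + M + δ + e + 2)) (2 * l1 * δ * (M * l1 + 1))
  have hM : 0 ≤ M := add_nonneg hl2 he
  refine ⟨M * S + M / 2 + δ * K + 2 * δ, by positivity, fun hd hhyp n γ hγ k hk =>
    hγ.gp_le hd hhyp hδ hl1 hl2 he (r := M * l1 * (3 * M + 2 * (δ * K) + e) / 2 + 1) (by linarith)
      ?_ hK hk⟩
  convert hS using 1
  ring

/-- For any `λ1, λ2 > 0` and `ε, δ ≥ 0` there exists `α ≥ 0` such that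
every `(λ1,λ2,ε)`-quasigeodesic, `δ`-hyperbolic metric space is `α`-rough geodesic. -/
theorem quasigeodesic_hyperbolic_implies_rough_geodesic
    (l1 l2 e δ : ℝ) (hl1 : 0 < l1) (hl2 : 0 < l2) (he : 0 ≤ e) (hδ : 0 ≤ δ) :
    ∃ α : ℝ, 0 ≤ α ∧ ∀ (Y : Type u) (d : Y → Y → ℝ), IsPseudometric d →
      (∀ x y : Y, d x y = 0 → x = y) → GromovHyperbolic d δ →
      QuasigeodesicSpace d l1 l2 e → RoughGeodesic d α := by
  obtain ⟨c, hc, hmorse⟩ := exists_gp_le_of_isQuasigeodesic l1 l2 e δ hl1 hl2.le he hδ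
  have hM : 0 ≤ l2 + e := by positivity
  refine ⟨2 * (l2 + e + 1) + 2 * c + 2 * δ, by positivity, fun Y d hd _ hhyp hq => ?_⟩
  refine hhyp.roughGeodesic_of_forall_exists_gp_le hd hc hM fun x y k hk => ?_
  obtain ⟨n, γ, rfl, rfl, hγ : IsQuasigeodesic d l1 l2 e n γ⟩ := hq x y
  obtain ⟨i, hin, hik⟩ := exists_mem_Icc_of_step_le (t := fun i => gp d (γ 0) (γ i) (γ n))
    (v := k) (n := n) hM (by simp [hd.gp_base_left])
    (by simpa [hd.gp_self, hd.dist_comm (γ n)] using hk)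
    fun i hi => hγ.gp_succ_le hd he (γ 0) (γ n) hi
  exact ⟨γ i, hmorse hd hhyp hγ i hin, abs_le.mpr ⟨by linarith [hik.1], by linarith [hik.2]⟩⟩
end
end

section
/- Let G be a group generated by a finite symmetric set, d ∈ D(G) an α-rough geodesic pseudometric, and n > α + 1 an integer such that S_n := {x ∈ G : d(x,1) ≤ n} generates G. Then for all x,y ∈ G: (n−1−α)·d_{S_n}(x,y) − (n−1) ≤ d(x,y) ≤ n·d_{S_n}(x,y). -/
/-!
A word of length `k` in `S_n` moves a point by at most `n k`, by the triangle inequality and left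
invariance. Conversely, sampling an `α`-rough geodesic of length `m` from `x` to `y` every
`s = ⌊n - α⌋` steps gives `⌈m / s⌉` consecutive quotients, each in `S_n` since `s + α ≤ n`;
as `m ≤ d(x,y) + α` and `n - 1 - α < s`, this bounds the word length from above.
-/

open Filter Set MeasureTheory Topology

noncomputable section

variable {X : Type*}

variable {G : Type*} [Group G]

/-- Left invariance of a pseudometric on a group. -/
def LeftInvariant (d : G → G → ℝ) : Prop := ∀ g x y : G, d (g * x) (g * y) = d x y

/-- Word norm with respect to a subset `S`. -/
def wordNorm (S : Set G) (w : G) : ℕ :=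
  sInf {k : ℕ | ∃ f : Fin k → G, (∀ i, f i ∈ S) ∧ (List.ofFn f).prod = w}

/-- Word metric with respect to a subset `S`. -/
def wordDist (S : Set G) (x y : G) : ℝ := (wordNorm S (x⁻¹ * y) : ℝ)

/-- `S` is a symmetric generating set. -/
def GenSymm (S : Set G) : Prop := (∀ s ∈ S, s⁻¹ ∈ S) ∧ Subgroup.closure S = ⊤

/-- `d'` is quasi-isometric to `d` (via the identity map of `G`). -/
def QIsometric (d d' : G → G → ℝ) : Prop :=
  ∃ l1 l2 e : ℝ, 0 < l1 ∧ 0 < l2 ∧ 0 ≤ e ∧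
    ∀ x y : G, d x y / l1 - e ≤ d' x y ∧ d' x y ≤ l2 * d x y + e

/-- Membership in `D(G)`: a left-invariant hyperbolic pseudometric on `G`
quasi-isometric to a word metric w.r.t. a finite symmetric generating set. -/
def InD (d : G → G → ℝ) : Prop :=
  IsPseudometric d ∧ LeftInvariant d ∧ (∃ δ ≥ (0 : ℝ), GromovHyperbolic d δ) ∧
    ∃ S : Finset G, GenSymm (S : Set G) ∧ QIsometric (wordDist (S : Set G)) d

/-- `G` is a hyperbolic group: some word metric is Gromov hyperbolic. -/
def IsHyperbolicGroup (G : Type*) [Group G] : Prop :=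
  ∃ S : Finset G, GenSymm (S : Set G) ∧ ∃ δ ≥ (0 : ℝ), GromovHyperbolic (wordDist (S : Set G)) δ

/-- `G` is non-elementary: it is not virtually abelian. -/
def NonElementary (G : Type*) [Group G] : Prop :=
  ¬ ∃ H : Subgroup G, H.FiniteIndex ∧ ∀ a ∈ H, ∀ b ∈ H, a * b = b * a

/-- Translation length `ℓ_d(x) = lim_n d(x^n,1)/n`; by Fekete's subadditivity lemma the
limit exists and equals the infimum of `d(x^n,1)/n` over `n ≥ 1`. -/
def tlen (d : G → G → ℝ) (x : G) : ℝ :=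
  sInf {r : ℝ | ∃ n : ℕ, r = d (x ^ (n + 1)) 1 / (n + 1)}

/-- Dilation `Dil(d,d') = sup_x ℓ_d(x)/ℓ_{d'}(x)` over infinite-order elements. -/
def Dil (d d' : G → G → ℝ) : ℝ :=
  sSup {r : ℝ | ∃ x : G, ¬ IsOfFinOrder x ∧ r = tlen d x / tlen d' x}

/-- Critical exponent `h(d) = lim_n log|B_d(n)|/n` (the limit exists, so it equals
the limsup used here). -/
def hCrit (d : G → G → ℝ) : ℝ :=
  Filter.limsup (fun n : ℕ => Real.log (Set.ncard {x : G | d x 1 ≤ (n : ℝ)}) / (n : ℝ)) atTop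

/-- `Λ(d1,d2)`: the infimum of `λ1·λ2` over quasi-isometry constants between `d1,d2`. -/
def Lam (d1 d2 : G → G → ℝ) : ℝ :=
  sInf {l : ℝ | ∃ l1 l2 A : ℝ, 0 < l1 ∧ 0 < l2 ∧ 0 ≤ A ∧ l = l1 * l2 ∧
    ∀ x y : G, d2 x y / l1 - A ≤ d1 x y ∧ d1 x y ≤ l2 * d2 x y + A}


/-- `wordNorm S w` is the infimum of this set, hence `0` when `w` is not a product of letters
of `S`. -/
def wordLengths (S : Set G) (w : G) : Set ℕ :=
  {k : ℕ | ∃ f : Fin k → G, (∀ i, f i ∈ S) ∧ (List.ofFn f).prod = w}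

theorem zero_mem_wordLengths_one (S : Set G) : 0 ∈ wordLengths S (1 : G) :=
  ⟨Fin.elim0, fun i => i.elim0, rfl⟩

theorem succ_mem_wordLengths_mul {S : Set G} {a w : G} {k : ℕ} (ha : a ∈ S)
    (hk : k ∈ wordLengths S w) : k + 1 ∈ wordLengths S (a * w) := by
  obtain ⟨f, hfS, rfl⟩ := hk
  refine ⟨Fin.cons a f, fun i => ?_, by simp [List.ofFn_succ]⟩
  cases i using Fin.cases with
  | zero => simpa using ha
  | succ j => simpa using hfS j

theorem wordNorm_le_of_mem_wordLengths {S : Set G} {w : G} {k : ℕ}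
    (hk : k ∈ wordLengths S w) : wordNorm S w ≤ k :=
  Nat.sInf_le hk

theorem wordNorm_mem_wordLengths {S : Set G} {w : G} (h : (wordLengths S w).Nonempty) :
    wordNorm S w ∈ wordLengths S w :=
  Nat.sInf_mem h

/-- Cutting a path `γ 0, …, γ m` into `⌈m / s⌉` pieces of index length at most `s`. -/
theorem exists_mem_wordLengths_of_path (S : Set G) {s : ℕ} (hs : 0 < s) (m : ℕ) (γ : ℕ → G)
    (hγ : ∀ i j, i ≤ j → j ≤ m → j ≤ i + s → (γ i)⁻¹ * γ j ∈ S) :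
    ∃ k, k * s < m + s ∧ k ∈ wordLengths S ((γ 0)⁻¹ * γ m) := by
  induction m using Nat.strong_induction_on generalizing γ with
  | _ m ih =>
  rcases Nat.eq_zero_or_pos m with rfl | hm
  · exact ⟨0, by omega, by simpa using zero_mem_wordLengths_one S⟩
  rcases le_or_gt m s with hms | hsm
  · refine ⟨1, by omega, ?_⟩
    simpa using succ_mem_wordLengths_mul (hγ 0 m (by omega) le_rfl (by omega))
      (zero_mem_wordLengths_one S)
  · obtain ⟨k, hk, hkw⟩ := ih (m - s) (by omega) (fun i => γ (i + s))
      (fun i j hij hjm hjs => hγ _ _ (by omega) (by omega) (by omega))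
    refine ⟨k + 1, by rw [Nat.add_one_mul]; omega, ?_⟩
    have hfirst := hγ 0 s (Nat.zero_le s) hsm.le (by omega)
    simpa [Nat.sub_add_cancel hsm.le, mul_assoc] using succ_mem_wordLengths_mul hfirst hkw

namespace LeftInvariant

variable {d : G → G → ℝ}

theorem dist_inv_mul_one (hd : IsPseudometric d) (hinv : LeftInvariant d) (x y : G) :
    d (x⁻¹ * y) 1 = d x y := by
  simpa [hd.2.1 y x] using (hinv x (x⁻¹ * y) 1).symm

theorem dist_list_prod_one_le (hd : IsPseudometric d) (hinv : LeftInvariant d) {c : ℝ}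
    (L : List G) (hL : ∀ g ∈ L, d g 1 ≤ c) : d L.prod 1 ≤ c * L.length := by
  induction L with
  | nil => simp [hd.1]
  | cons a L ih =>
    have hshift : d (a * L.prod) a = d L.prod 1 := by simpa using hinv a L.prod 1
    have hrest := ih fun g hg => hL g (List.mem_cons_of_mem a hg)
    have hfirst := hL a List.mem_cons_self
    calc d (a * L.prod) 1 ≤ d (a * L.prod) a + d a 1 := hd.2.2 _ _ _
      _ ≤ c * (L.length + 1) := by linarith
      _ = c * (a :: L).length := by simp

theorem dist_le_mul_wordDist (hd : IsPseudometric d) (hinv : LeftInvariant d) {S : Set G}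
    {c : ℝ} (hS : ∀ g ∈ S, d g 1 ≤ c) {x y : G} (hxy : (wordLengths S (x⁻¹ * y)).Nonempty) :
    d x y ≤ c * wordDist S x y := by
  obtain ⟨f, hfS, hprod⟩ := wordNorm_mem_wordLengths hxy
  have h := dist_list_prod_one_le hd hinv (List.ofFn f) fun g hg => by
    obtain ⟨i, rfl⟩ := List.mem_ofFn.mp hg
    exact hS _ (hfS i)
  rwa [hprod, List.length_ofFn, dist_inv_mul_one hd hinv] at h

end LeftInvariant

/-- Sample an `α`-rough geodesic of length `m` from `x` to `y` every `s` steps. -/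
theorem RoughGeodesic.exists_mem_wordLengths_ball {d : G → G → ℝ} {α c : ℝ}
    (hrg : RoughGeodesic d α) (hd : IsPseudometric d) (hinv : LeftInvariant d) {s : ℕ}
    (hs : 0 < s) (hsc : s + α ≤ c) (x y : G) :
    ∃ m k : ℕ, m - α ≤ d x y ∧ k * s < m + s ∧ k ∈ wordLengths {g | d g 1 ≤ c} (x⁻¹ * y) := by
  obtain ⟨m, γ, rfl, rfl, hγ⟩ := hrg x y
  obtain ⟨k, hk, hkw⟩ := exists_mem_wordLengths_of_path {g | d g 1 ≤ c} hs m γ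
    fun i j hij hjm hjs => by
      have hdist := (hγ i j (hij.trans hjm) hjm).2
      have hij' : |(i : ℝ) - j| ≤ s := by
        have : (i : ℝ) ≤ j := by exact_mod_cast hij
        have : (j : ℝ) ≤ i + s := by exact_mod_cast hjs
        exact abs_sub_le_iff.2 ⟨by linarith, by linarith⟩
      show d ((γ i)⁻¹ * γ j) 1 ≤ c
      rw [hinv.dist_inv_mul_one hd]
      linarith
  refine ⟨m, k, ?_, hk, hkw⟩
  simpa [hd.2.1 (γ m)] using (hγ m 0 le_rfl (Nat.zero_le m)).1

theorem word_metric_approximation_general (G : Type*) [Group G]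
    (d : G → G → ℝ) (hd : InD d) (α : ℝ) (hrg : RoughGeodesic d α)
    (n : ℕ) (hn : α + 1 < (n : ℝ)) :
    ∀ x y : G,
      ((n : ℝ) - 1 - α) * wordDist {x : G | d x 1 ≤ (n : ℝ)} x y - ((n : ℝ) - 1) ≤ d x y ∧
        d x y ≤ (n : ℝ) * wordDist {x : G | d x 1 ≤ (n : ℝ)} x y := by
  obtain ⟨hpm, hinv, -⟩ := hd
  intro x y
  -- `s = ⌊n - α⌋` is the largest step along the rough geodesic that stays in the ball of radius `n`.
  set s := ⌊(n : ℝ) - α⌋₊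
  have hs_le : (s : ℝ) ≤ n - α := Nat.floor_le (by linarith)
  have hs_gt : (n : ℝ) - α - 1 < s := Nat.sub_one_lt_floor _
  have hs : 0 < s := by exact_mod_cast (show (0 : ℝ) < s by linarith)
  obtain ⟨m, k, hm, hk, hkw⟩ :=
    hrg.exists_mem_wordLengths_ball (c := n) hpm hinv hs (by linarith) x y
  have hwk : wordDist {g | d g 1 ≤ (n : ℝ)} x y ≤ k :=
    Nat.cast_le.2 (wordNorm_le_of_mem_wordLengths hkw)
  have hw0 : 0 ≤ wordDist {g | d g 1 ≤ (n : ℝ)} x y := Nat.cast_nonneg _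
  have hks : (k : ℝ) * s + 1 ≤ m + s := by exact_mod_cast hk
  refine ⟨?_, hinv.dist_le_mul_wordDist hpm (fun g hg => hg) ⟨k, hkw⟩⟩
  calc ((n : ℝ) - 1 - α) * wordDist {g | d g 1 ≤ (n : ℝ)} x y - (n - 1)
      ≤ s * k - (n - 1) := by gcongr; linarith
    _ ≤ d x y := by nlinarith

/-- If `d ∈ D(G)` is `α`-rough geodesic and `n > α + 1` is such that
the ball `S_n = B_d(n)` generates `G`, then
`(n−1−α)·d_{S_n}(x,y) − (n−1) ≤ d(x,y) ≤ n·d_{S_n}(x,y)`. -/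
theorem word_metric_approximation (G : Type*) [Group G]
    (d : G → G → ℝ) (hd : InD d) (α : ℝ) (hα : 0 ≤ α) (hrg : RoughGeodesic d α)
    (n : ℕ) (hn : α + 1 < (n : ℝ))
    (hgen : Subgroup.closure {x : G | d x 1 ≤ (n : ℝ)} = ⊤) :
    ∀ x y : G,
      ((n : ℝ) - 1 - α) * wordDist {x : G | d x 1 ≤ (n : ℝ)} x y - ((n : ℝ) - 1) ≤ d x y ∧
        d x y ≤ (n : ℝ) * wordDist {x : G | d x 1 ≤ (n : ℝ)} x y :=
  word_metric_approximation_general G d hd α hrg n hn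
end
end

section
/- Let G be a non-elementary hyperbolic group. For any ρ ∈ 𝒟(G) and R ≥ 0, there are at most finitely many ψ ∈ Out(G) with Δ(ρ, ψ(ρ)) ≤ R. That is, the isometric action of Out(G) on (𝒟(G), Δ) is metrically proper. -/
open Filter Set MeasureTheory Topology

noncomputable section

variable {X : Type*}

variable {G : Type*} [Group G]

/-- Rough similarity of pseudometrics: `|d − k·d'| ≤ A` for some `k > 0`, `A ≥ 0`. -/
def RSim (d d' : G → G → ℝ) : Prop :=
  ∃ k A : ℝ, 0 < k ∧ 0 ≤ A ∧ ∀ x y : G, |d x y - k * d' x y| ≤ A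

set_option linter.unusedSectionVars false in
theorem rsim_refl (d : G → G → ℝ) : RSim d d :=
  ⟨1, 0, one_pos, le_refl 0, fun x y => by simp⟩

set_option linter.unusedSectionVars false in
theorem rsim_symm {d d' : G → G → ℝ} : RSim d d' → RSim d' d := by
  rintro ⟨k, A, hk, hA, h⟩
  refine ⟨k⁻¹, k⁻¹ * A, inv_pos.2 hk, mul_nonneg (inv_pos.2 hk).le hA, fun x y => ?_⟩
  have hk0 : k ≠ 0 := ne_of_gt hk
  have h1 : d' x y - k⁻¹ * d x y = -(k⁻¹ * (d x y - k * d' x y)) := by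
    field_simp
    ring
  rw [h1, abs_neg, abs_mul, abs_of_pos (inv_pos.2 hk)]
  exact mul_le_mul_of_nonneg_left (h x y) (inv_pos.2 hk).le

set_option linter.unusedSectionVars false in
theorem rsim_trans {d1 d2 d3 : G → G → ℝ} : RSim d1 d2 → RSim d2 d3 → RSim d1 d3 := by
  rintro ⟨k1, A1, hk1, hA1, h1⟩ ⟨k2, A2, hk2, hA2, h2⟩
  refine ⟨k1 * k2, A1 + k1 * A2, mul_pos hk1 hk2, by positivity, fun x y => ?_⟩
  have h3 : |k1 * d2 x y - k1 * k2 * d3 x y| = k1 * |d2 x y - k2 * d3 x y| := by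
    rw [show k1 * d2 x y - k1 * k2 * d3 x y = k1 * (d2 x y - k2 * d3 x y) by ring,
      abs_mul, abs_of_pos hk1]
  calc |d1 x y - k1 * k2 * d3 x y|
      ≤ |d1 x y - k1 * d2 x y| + |k1 * d2 x y - k1 * k2 * d3 x y| :=
        abs_sub_le _ _ _
    _ ≤ A1 + k1 * A2 := by
        rw [h3]
        exact add_le_add (h1 x y) (mul_le_mul_of_nonneg_left (h2 x y) hk1.le)

/-- Elements of `D(G)`. -/
def DSub (G : Type*) [Group G] : Type _ := {d : G → G → ℝ // InD d}

/-- Rough similarity as a setoid on `D(G)`. -/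
def rsSetoid (G : Type*) [Group G] : Setoid (DSub G) :=
  ⟨fun d d' => RSim d.1 d'.1,
    ⟨fun d => rsim_refl d.1, fun h => rsim_symm h, fun h h' => rsim_trans h h'⟩⟩

/-- The space `𝒟(G)` of metric structures on `G`. -/
def MetricStructures (G : Type*) [Group G] : Type _ := Quotient (rsSetoid G)

/-- The distance `Δ = log Λ` on `𝒟(G)` (the value of `Λ` does not depend on the
choice of representatives). -/
def Delta (ρ1 ρ2 : MetricStructures G) : ℝ :=
  Real.log (sInf {l : ℝ | ∃ d1 d2 : DSub G,
    Quotient.mk (rsSetoid G) d1 = ρ1 ∧ Quotient.mk (rsSetoid G) d2 = ρ2 ∧ l = Lam d1.1 d2.1})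

/-- Pullback of a pseudometric under an automorphism: `ψ(d)(x,y) = d(ψ⁻¹x, ψ⁻¹y)`. -/
def pull (ψ : MulAut G) (d : G → G → ℝ) : G → G → ℝ :=
  fun x y => d (ψ.symm x) (ψ.symm y)

/-!
If `Λ(d, ψ(d)) ≤ e^R`, one of `ψ`, `ψ⁻¹` distorts `d`, and hence every word length on `G`, by a
factor bounded in terms of `R` alone. Such an automorphism `χ` multiplies translation lengths by at
most that factor, so all products `χ(s) χ(s')` of images of generators have uniformly bounded
translation length. By a Breuillard–Fujiwara type inequality in the hyperbolic Cayley graph some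
point `x` is moved a bounded distance by every `χ(s)`, i.e. `conj(x)⁻¹ ∘ χ` sends each generator
into a fixed ball. An automorphism is determined by the images of the generators, so there are
only finitely many such normalised automorphisms, and `ψ` is in the outer class of one of them or
of its inverse.
-/

section WordNorm

variable {S : Set G}

theorem wordNorm_le_length {l : List G} (hl : ∀ x ∈ l, x ∈ S) :
    wordNorm S l.prod ≤ l.length :=
  Nat.sInf_le ⟨l.get, fun i => hl _ (List.get_mem l i), by rw [List.ofFn_get]⟩

theorem wordNorm_one (S : Set G) : wordNorm S (1 : G) = 0 :=
  Nat.le_zero.1 (wordNorm_le_length (l := []) (by simp))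

theorem wordNorm_le_one_of_mem {s : G} (hs : s ∈ S) : wordNorm S s ≤ 1 := by
  simpa using wordNorm_le_length (S := S) (l := [s]) (by simpa using hs)

namespace GenSymm

variable (hS : GenSymm S)
include hS

theorem exists_list_prod_eq (g : G) : ∃ l : List G, (∀ x ∈ l, x ∈ S) ∧ l.prod = g := by
  have hg : g ∈ Submonoid.closure (S ∪ S⁻¹) := by
    rw [← Subgroup.closure_toSubmonoid, hS.2]; trivial
  obtain ⟨l, hl, rfl⟩ := Submonoid.exists_list_of_mem_closure hg
  refine ⟨l, fun x hx => ?_, rfl⟩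
  rcases hl x hx with h | h
  · exact h
  · simpa using hS.1 _ h

theorem exists_list_length_eq_wordNorm (g : G) :
    ∃ l : List G, (∀ x ∈ l, x ∈ S) ∧ l.prod = g ∧ l.length = wordNorm S g := by
  obtain ⟨l, hl, hg⟩ := hS.exists_list_prod_eq g
  obtain ⟨f, hf, hprod⟩ : wordNorm S g ∈ {k : ℕ | ∃ f : Fin k → G,
      (∀ i, f i ∈ S) ∧ (List.ofFn f).prod = g} :=
    Nat.sInf_mem ⟨l.length, l.get, fun i => hl _ (List.get_mem l i), by rwa [List.ofFn_get]⟩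
  exact ⟨List.ofFn f, by simpa [List.mem_ofFn] using hf, hprod, List.length_ofFn⟩

theorem wordNorm_mul_le (g h : G) : wordNorm S (g * h) ≤ wordNorm S g + wordNorm S h := by
  obtain ⟨l₁, hl₁, rfl, hn₁⟩ := hS.exists_list_length_eq_wordNorm g
  obtain ⟨l₂, hl₂, rfl, hn₂⟩ := hS.exists_list_length_eq_wordNorm h
  have := wordNorm_le_length (S := S) (l := l₁ ++ l₂) (by simp only [List.mem_append]; grind)
  simpa [hn₁, hn₂] using this

theorem wordNorm_inv_le (g : G) : wordNorm S g⁻¹ ≤ wordNorm S g := by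
  obtain ⟨l, hl, rfl, hn⟩ := hS.exists_list_length_eq_wordNorm g
  have := wordNorm_le_length (S := S) (l := (l.map (·⁻¹)).reverse) fun x hx => by
    obtain ⟨y, hy, rfl⟩ := List.mem_map.1 (List.mem_reverse.1 hx)
    exact hS.1 y (hl y hy)
  rwa [← List.prod_inv_reverse, List.length_reverse, List.length_map, hn] at this

theorem wordNorm_inv (g : G) : wordNorm S g⁻¹ = wordNorm S g :=
  le_antisymm (hS.wordNorm_inv_le g) (by simpa using hS.wordNorm_inv_le g⁻¹)

theorem wordNorm_list_prod_le (l : List G) :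
    wordNorm S l.prod ≤ (l.map (wordNorm S)).sum := by
  induction l with
  | nil => simp [wordNorm_one]
  | cons a l ih =>
    simpa using (hS.wordNorm_mul_le a l.prod).trans (Nat.add_le_add_left ih _)

theorem exists_wordNorm_eq_of_le {g : G} {r : ℕ} (hr : r ≤ wordNorm S g) :
    ∃ x : G, wordNorm S x = r ∧ wordNorm S (x⁻¹ * g) = wordNorm S g - r := by
  obtain ⟨l, hl, rfl, hn⟩ := hS.exists_list_length_eq_wordNorm g
  have h₁ := wordNorm_le_length (S := S) (l := l.take r) fun x hx =>
    hl x (List.mem_of_mem_take hx)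
  have h₂ := wordNorm_le_length (S := S) (l := l.drop r) fun x hx =>
    hl x (List.mem_of_mem_drop hx)
  have h₃ := hS.wordNorm_mul_le (l.take r).prod (l.drop r).prod
  rw [List.prod_take_mul_prod_drop] at h₃
  refine ⟨(l.take r).prod, ?_, ?_⟩ <;>
  · simp only [List.length_take, List.length_drop, ← List.prod_take_mul_prod_drop l r,
      inv_mul_cancel_left] at *
    omega

end GenSymm

end WordNorm

section WordNormMap

variable {H : Type*} [Group H] {S : Set G} {T : Set H}

theorem GenSymm.wordNorm_map_le (hS : GenSymm S) (hT : GenSymm T) (f : G →* H) {κ : ℕ}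
    (hκ : ∀ s ∈ S, wordNorm T (f s) ≤ κ) (g : G) : wordNorm T (f g) ≤ κ * wordNorm S g := by
  obtain ⟨l, hl, rfl, hn⟩ := hS.exists_list_length_eq_wordNorm g
  rw [← hn, map_list_prod]
  refine (hT.wordNorm_list_prod_le _).trans ?_
  simpa [mul_comm] using List.sum_le_card_nsmul (l.map (wordNorm T ∘ f)) κ
    (by simpa using fun s hs => hκ s (hl s hs))

theorem GenSymm.finite_setOf_wordNorm_le {S : Finset G} (hS : GenSymm (S : Set G)) (n : ℕ) :
    {g : G | wordNorm (S : Set G) g ≤ n}.Finite := by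
  refine ((Set.finite_Iic n).biUnion fun k _ =>
    Set.finite_range fun w : Fin k → (S : Set G) => (List.ofFn fun i => (w i : G)).prod).subset ?_
  intro g hg
  obtain ⟨l, hl, rfl, hn⟩ := hS.exists_list_length_eq_wordNorm g
  refine Set.mem_biUnion (x := l.length) (by simpa [hn] using hg)
    ⟨fun i => ⟨l.get i, hl _ (List.get_mem l i)⟩, ?_⟩
  simp

theorem GenSymm.finite_setOf_mulAut {S : Finset G} (hS : GenSymm (S : Set G)) (n : ℕ) :
    {φ : MulAut G | ∀ s ∈ S, wordNorm (S : Set G) (φ s) ≤ n}.Finite := by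
  let restrict : MulAut G → (S → G) := fun φ s => φ s
  refine Set.Finite.of_finite_image (f := restrict) ?_ fun φ₁ _ φ₂ _ h => ?_
  · refine (Set.Finite.pi (t := fun _ => {g : G | wordNorm (S : Set G) g ≤ n})
      fun _ => hS.finite_setOf_wordNorm_le n).subset ?_
    rintro _ ⟨φ, hφ, rfl⟩ s -
    exact hφ s s.2
  · have := MonoidHom.eq_of_eqOn_dense hS.2 (f := φ₁.toMonoidHom) (g := φ₂.toMonoidHom)
      fun s hs => congrFun h ⟨s, hs⟩
    exact MulEquiv.toMonoidHom_injective this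

end WordNormMap

theorem GromovHyperbolic.nonneg {X : Type*} {d : X → X → ℝ} {δ : ℝ}
    (h : GromovHyperbolic d δ) (x : X) : 0 ≤ δ := by
  simpa using h x x x x

section WordLength

variable {S : Set G}

def wordLength (S : Set G) (g : G) : ℝ := wordNorm S g

/-- The Gromov product `(x|y)_1` of the word metric. -/
def gromovProd (S : Set G) (x y : G) : ℝ :=
  (wordLength S x + wordLength S y - wordLength S (x⁻¹ * y)) / 2

theorem wordLength_nonneg (g : G) : 0 ≤ wordLength S g := Nat.cast_nonneg _

theorem wordLength_one : wordLength S (1 : G) = 0 := by simp [wordLength, wordNorm_one]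

theorem wordLength_le_one_of_mem {s : G} (hs : s ∈ S) : wordLength S s ≤ 1 := by
  simpa [wordLength] using wordNorm_le_one_of_mem hs

theorem wordDist_one_left (g : G) : wordDist S 1 g = wordLength S g := by
  simp [wordDist, wordLength]

namespace GenSymm

variable (hS : GenSymm S)
include hS

theorem wordLength_inv (g : G) : wordLength S g⁻¹ = wordLength S g := by
  simp [wordLength, hS.wordNorm_inv]

theorem wordDist_one_right (g : G) : wordDist S g 1 = wordLength S g := by
  simp [wordDist, wordLength, hS.wordNorm_inv]

theorem wordLength_mul_le (g h : G) :
    wordLength S (g * h) ≤ wordLength S g + wordLength S h := by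
  unfold wordLength
  exact_mod_cast hS.wordNorm_mul_le g h

theorem wordLength_conj_le (x g : G) :
    wordLength S (x⁻¹ * g * x) ≤ wordLength S g + 2 * wordLength S x := by
  have h₁ := hS.wordLength_mul_le (x⁻¹ * g) x
  have h₂ := hS.wordLength_mul_le x⁻¹ g
  rw [hS.wordLength_inv] at h₂
  linarith

theorem wordLength_pow_le (g : G) (k : ℕ) : wordLength S (g ^ k) ≤ k * wordLength S g := by
  induction k with
  | zero => simp [wordLength_one]
  | succ k ih =>
    rw [pow_succ, Nat.cast_succ, add_one_mul]
    exact (hS.wordLength_mul_le _ _).trans (by linarith)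

theorem exists_wordLength_eq_of_le {g : G} {r : ℕ} (hr : r ≤ wordNorm S g) :
    ∃ x : G, wordLength S x = r ∧ wordLength S (x⁻¹ * g) = wordLength S g - r := by
  obtain ⟨x, hx, hxg⟩ := hS.exists_wordNorm_eq_of_le hr
  exact ⟨x, by simp [wordLength, hx], by simp [wordLength, hxg, Nat.cast_sub hr]⟩

theorem gromovProd_comm (x y : G) : gromovProd S x y = gromovProd S y x := by
  rw [gromovProd, gromovProd, ← hS.wordLength_inv (y⁻¹ * x)]
  simp only [mul_inv_rev, inv_inv]
  ring

theorem gromovProd_nonneg (x y : G) : 0 ≤ gromovProd S x y := by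
  have := hS.wordLength_mul_le x⁻¹ y
  rw [hS.wordLength_inv] at this
  rw [gromovProd]
  linarith

theorem gp_wordDist_one (x y : G) : gp (wordDist S) 1 x y = gromovProd S x y := by
  simp only [gp, gromovProd, hS.wordDist_one_right]
  rfl

end GenSymm

end WordLength

theorem GenSymm.exists_wordLength_map_le {H : Type*} [Group H] {S : Finset G} {T : Set H}
    (hS : GenSymm (S : Set G)) (hT : GenSymm T) (f : G →* H) :
    ∃ κ : ℝ, 0 < κ ∧ ∀ g, wordLength T (f g) ≤ κ * wordLength S g := by
  set κ := S.sup fun s => wordNorm T (f s)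
  have hκ : ∀ g, wordLength T (f g) ≤ κ * wordLength S g := fun g => by
    unfold wordLength
    exact_mod_cast hS.wordNorm_map_le hT f
      (fun s hs => Finset.le_sup (f := fun s => wordNorm T (f s)) hs) g
  refine ⟨κ + 1, by positivity, fun g => (hκ g).trans ?_⟩
  nlinarith [wordLength_nonneg (S := (S : Set G)) g]

section TranslationLength

variable {S : Set G}

theorem bddBelow_range_wordLength_pow_div (g : G) :
    BddBelow (Set.range fun n : ℕ => wordLength S (g ^ (n + 1)) / (n + 1)) :=
  ⟨0, by rintro _ ⟨n, rfl⟩; exact div_nonneg (wordLength_nonneg _) (by positivity)⟩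

namespace GenSymm

variable (hS : GenSymm S)
include hS

theorem tlen_wordDist_eq (g : G) :
    tlen (wordDist S) g = ⨅ n : ℕ, wordLength S (g ^ (n + 1)) / (n + 1) := by
  simp only [tlen, hS.wordDist_one_right, iInf]
  congr 1
  ext
  simp [eq_comm]

theorem tlen_wordDist_le_div (g : G) {m : ℕ} (hm : 0 < m) :
    tlen (wordDist S) g ≤ wordLength S (g ^ m) / m := by
  obtain ⟨n, rfl⟩ := Nat.exists_eq_add_one_of_ne_zero hm.ne'
  rw [hS.tlen_wordDist_eq]
  exact_mod_cast ciInf_le (bddBelow_range_wordLength_pow_div g) n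

theorem le_tlen_wordDist {g : G} {c : ℝ} (h : ∀ n : ℕ, c ≤ wordLength S (g ^ (n + 1)) / (n + 1)) :
    c ≤ tlen (wordDist S) g := by
  rw [hS.tlen_wordDist_eq]
  exact le_ciInf h

theorem tlen_wordDist_nonneg (g : G) : 0 ≤ tlen (wordDist S) g :=
  hS.le_tlen_wordDist fun _ => div_nonneg (wordLength_nonneg _) (by positivity)

theorem tlen_wordDist_le_wordLength (g : G) : tlen (wordDist S) g ≤ wordLength S g := by
  simpa using hS.tlen_wordDist_le_div g one_pos

theorem tlen_wordDist_le_of_wordLength_pow_le {u v : G} {P Q : ℝ} (hP : 0 ≤ P)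
    (h : ∀ n : ℕ, wordLength S (v ^ n) ≤ P * wordLength S (u ^ n) + Q) :
    tlen (wordDist S) v ≤ P * tlen (wordDist S) u := by
  rw [hS.tlen_wordDist_eq u, Real.mul_iInf_of_nonneg hP]
  refine le_ciInf fun n => ?_
  set a := wordLength S (u ^ (n + 1))
  have hk (k : ℕ) :
      tlen (wordDist S) v ≤ P * (a / (n + 1)) + Q / (n + 1) * (1 / (k + 1)) := by
    have h₁ := hS.tlen_wordDist_le_div v (m := (n + 1) * (k + 1)) (by positivity)
    have h₂ := hS.wordLength_pow_le (u ^ (n + 1)) (k + 1)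
    rw [← pow_mul] at h₂
    calc tlen (wordDist S) v
        ≤ wordLength S (v ^ ((n + 1) * (k + 1))) / (((n : ℝ) + 1) * (k + 1)) := by
          exact_mod_cast h₁
      _ ≤ (P * ((k + 1) * a) + Q) / (((n : ℝ) + 1) * (k + 1)) := by
          gcongr
          exact (h _).trans (by gcongr; exact_mod_cast h₂)
      _ = _ := by field_simp
  have hlim : Tendsto (fun k : ℕ => P * (a / (n + 1)) + Q / (n + 1) * (1 / ((k : ℝ) + 1)))
      atTop (𝓝 (P * (a / (n + 1)))) := by
    simpa using (tendsto_one_div_add_atTop_nhds_zero_nat.const_mul (Q / (n + 1))).const_add _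
  exact ge_of_tendsto' hlim hk

theorem tlen_wordDist_conj_le (x g : G) :
    tlen (wordDist S) (x⁻¹ * g * x) ≤ tlen (wordDist S) g := by
  refine (one_mul (tlen (wordDist S) g)) ▸
    hS.tlen_wordDist_le_of_wordLength_pow_le zero_le_one (Q := 2 * wordLength S x) fun n => ?_
  have hpow : (x⁻¹ * g * x) ^ n = x⁻¹ * g ^ n * x := by simpa using conj_pow (a := x⁻¹)
  rw [hpow, one_mul]
  exact hS.wordLength_conj_le x (g ^ n)

end GenSymm

end TranslationLength

section Hyperbolic

variable {S : Set G} {δ : ℝ}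

namespace GenSymm

variable (hS : GenSymm S) (hδ : GromovHyperbolic (wordDist S) δ)
include hS hδ

theorem min_gromovProd_sub_le (x y z : G) :
    min (gromovProd S x y) (gromovProd S y z) - δ ≤ gromovProd S x z := by
  simpa only [hS.gp_wordDist_one] using hδ x y z 1

theorem gromovProd_le_of_lt {x y z : G} (h : gromovProd S x z + δ < gromovProd S y z) :
    gromovProd S x y ≤ gromovProd S x z + δ := by
  have := hS.min_gromovProd_sub_le hδ x y z
  rcases min_cases (gromovProd S x y) (gromovProd S y z) with ⟨hm, -⟩ | ⟨hm, -⟩ <;> linarith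

theorem wordLength_sub_gromovProd_le_tlen (g : G) :
    wordLength S g - 2 * gromovProd S g g⁻¹ - 2 * δ ≤ tlen (wordDist S) g := by
  set σ := gromovProd S g g⁻¹
  set c := wordLength S g - 2 * σ - 2 * δ
  rcases le_or_gt c 0 with hc | hc
  · exact hc.trans (hS.tlen_wordDist_nonneg g)
  have hstep : ∀ n : ℕ, c ≤ wordLength S (g ^ (n + 1)) - wordLength S (g ^ n) := by
    intro n
    induction n with
    | zero =>
      simp only [zero_add, pow_one, pow_zero, wordLength_one]
      linarith [hS.gromovProd_nonneg g g⁻¹, hδ.nonneg 1]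
    | succ n ih =>
      have e₁ : gromovProd S (g ^ (n + 1)) g =
          (wordLength S (g ^ (n + 1)) + wordLength S g - wordLength S (g ^ n)) / 2 := by
        rw [gromovProd, pow_succ', mul_inv_rev, inv_mul_cancel_right, hS.wordLength_inv]
      have e₂ : gromovProd S (g ^ (n + 1)) g⁻¹ =
          (wordLength S (g ^ (n + 1)) + wordLength S g - wordLength S (g ^ (n + 2))) / 2 := by
        rw [gromovProd, hS.wordLength_inv, ← mul_inv_rev, ← pow_succ', hS.wordLength_inv]
      have hσ : σ = gromovProd S g⁻¹ g := hS.gromovProd_comm _ _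
      have := hS.gromovProd_le_of_lt hδ (x := g⁻¹) (y := g ^ (n + 1)) (z := g)
        (by rw [← hσ, e₁]; linarith)
      rw [hS.gromovProd_comm, e₂, ← hσ] at this
      linarith
  have hsum : ∀ n : ℕ, (n + 1) * c ≤ wordLength S (g ^ (n + 1)) := by
    intro n
    induction n with
    | zero => simpa [wordLength_one] using hstep 0
    | succ n ih =>
      push_cast
      linarith [hstep (n + 1)]
  exact hS.le_tlen_wordDist fun n => by
    rw [le_div_iff₀ (by positivity), mul_comm]
    exact hsum n

/-- A product of two elements of comparable length that cancel little against each other is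
almost cyclically reduced, hence has large translation length. -/
theorem le_tlen_wordDist_mul {g h : G} {l μ ρ : ℝ}
    (hg : l ≤ wordLength S g ∧ wordLength S g ≤ μ) (hh : l ≤ wordLength S h ∧ wordLength S h ≤ μ)
    (hgh : gromovProd S g⁻¹ h ≤ ρ) (hhg : gromovProd S g h⁻¹ ≤ ρ)
    (hl : 4 * ρ + 4 * δ + μ < 3 * l) :
    2 * l - 4 * ρ - 6 * δ ≤ tlen (wordDist S) (g * h) := by
  obtain ⟨hg₁, hg₂⟩ := hg
  obtain ⟨hh₁, hh₂⟩ := hh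
  have e₀ : gromovProd S g⁻¹ h = (wordLength S g + wordLength S h - wordLength S (g * h)) / 2 := by
    rw [gromovProd, inv_inv, hS.wordLength_inv]
  have e₁ : gromovProd S (g * h) g =
      (wordLength S (g * h) + wordLength S g - wordLength S h) / 2 := by
    rw [gromovProd, mul_inv_rev, inv_mul_cancel_right, hS.wordLength_inv]
  have e₂ : gromovProd S h⁻¹ (h⁻¹ * g⁻¹) =
      (wordLength S (g * h) + wordLength S h - wordLength S g) / 2 := by
    rw [gromovProd, inv_inv, mul_inv_cancel_left, hS.wordLength_inv, hS.wordLength_inv,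
      ← mul_inv_rev, hS.wordLength_inv]
    ring
  have hC : gromovProd S (g * h) h⁻¹ ≤ ρ + δ := by
    have := hS.gromovProd_le_of_lt hδ (x := h⁻¹) (y := g * h) (z := g)
      (by rw [hS.gromovProd_comm h⁻¹ g, e₁]; linarith [hδ.nonneg 1])
    rw [hS.gromovProd_comm h⁻¹ g, hS.gromovProd_comm h⁻¹] at this
    linarith
  have hD : gromovProd S (g * h) (g * h)⁻¹ ≤ ρ + 2 * δ := by
    have := hS.gromovProd_le_of_lt hδ (x := g * h) (y := h⁻¹ * g⁻¹) (z := h⁻¹)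
      (by rw [hS.gromovProd_comm (h⁻¹ * g⁻¹), e₂]; linarith)
    rw [mul_inv_rev]
    linarith
  linarith [hS.wordLength_sub_gromovProd_le_tlen hδ (g * h)]

/-- Pushing the base point a distance `r` along a geodesic from `1` to `a` shortens every `s`
whose axis follows that geodesic in both directions. -/
theorem wordLength_conj_le_of_le_gromovProd {x s a : G} {r : ℝ}
    (hx : wordLength S x = r) (hxa : wordLength S (x⁻¹ * a) = wordLength S a - r)
    (hs : r ≤ gromovProd S a s) (hs' : r ≤ gromovProd S a s⁻¹) (hsr : 2 * r ≤ wordLength S s) :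
    wordLength S (x⁻¹ * s * x) ≤ wordLength S s - 2 * r + 6 * δ := by
  have hxa' : gromovProd S x a = r := by rw [gromovProd, hx, hxa]; ring
  have hxs : r - δ ≤ gromovProd S x s := by
    have := hS.min_gromovProd_sub_le hδ x a s
    linarith [le_min hxa'.ge hs]
  have hsx : r - δ ≤ gromovProd S s⁻¹ x := by
    have := hS.min_gromovProd_sub_le hδ s⁻¹ a x
    rw [hS.gromovProd_comm s⁻¹ a, hS.gromovProd_comm a x] at this
    linarith [le_min hs' hxa'.ge]
  rw [gromovProd, inv_inv, hS.wordLength_inv, hx] at hsx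
  have hs_sx : r - δ ≤ gromovProd S s (s * x) := by
    have := hS.wordLength_mul_le (s * x) x⁻¹
    rw [mul_inv_cancel_right, hS.wordLength_inv, hx] at this
    rw [gromovProd, inv_mul_cancel_left, hx]
    linarith [hδ.nonneg 1]
  have hx_sx : r - 2 * δ ≤ gromovProd S x (s * x) := by
    have := hS.min_gromovProd_sub_le hδ x s (s * x)
    linarith [le_min hxs hs_sx]
  rw [gromovProd, hx, ← mul_assoc] at hx_sx
  linarith

end GenSymm

end Hyperbolic

section Displacement

variable {S : Set G} {δ : ℝ}

namespace GenSymm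

variable (hS : GenSymm S) (hδ : GromovHyperbolic (wordDist S) δ)
include hS hδ

/-- Moving the base point towards `a` cannot shorten every element of `C` (`hmin`), so
`wordLength_conj_le_of_le_gromovProd` must fail for some long `c ∈ C` or for its inverse. -/
theorem exists_mem_gromovProd_inv_lt {C : Finset G} (hC : ∀ c ∈ C, c⁻¹ ∈ C) {μ : ℝ}
    (hle : ∀ c ∈ C, wordLength S c ≤ μ) (hmin : ∀ x, ∃ c ∈ C, μ ≤ wordLength S (x⁻¹ * c * x))
    {a : G} {r : ℕ} (hr : r ≤ wordNorm S a) (hrδ : 3 * δ < r) (hrμ : 4 * r ≤ μ) :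
    ∃ u ∈ C, μ - 2 * r ≤ wordLength S u ∧ gromovProd S a u⁻¹ < r := by
  obtain ⟨x, hx, hxa⟩ := hS.exists_wordLength_eq_of_le hr
  obtain ⟨c, hcC, hc⟩ := hmin x
  have hc_long : μ - 2 * r ≤ wordLength S c := by
    linarith [hS.wordLength_conj_le x c]
  have hc_axis : ¬ (r ≤ gromovProd S a c ∧ r ≤ gromovProd S a c⁻¹) := fun ⟨h₁, h₂⟩ => by
    have := hS.wordLength_conj_le_of_le_gromovProd hδ hx hxa h₁ h₂ (by linarith)
    linarith [hle c hcC]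
  by_cases hc' : gromovProd S a c⁻¹ < r
  · exact ⟨c, hcC, hc_long, hc'⟩
  · refine ⟨c⁻¹, hC c hcC, by rwa [hS.wordLength_inv], ?_⟩
    rw [inv_inv]
    by_contra h
    exact hc_axis ⟨not_lt.1 h, not_lt.1 hc'⟩

theorem exists_mem_le_tlen_mul {C : Finset G} (hC : ∀ c ∈ C, c⁻¹ ∈ C) {n : ℕ}
    (hle : ∀ c ∈ C, wordLength S c ≤ n) (hmin : ∀ x, ∃ c ∈ C, n ≤ wordLength S (x⁻¹ * c * x))
    {a : G} (haC : a ∈ C) (ha : wordNorm S a = n) (hn : 100 * (δ + 1) < n) :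
    ∃ g ∈ C, ∃ h ∈ C, n ≤ tlen (wordDist S) (g * h) + 14 * δ + 4 := by
  have hδ0 := hδ.nonneg 1
  set r := n / 8
  have hr₁ : (8 * r : ℝ) ≤ n := by exact_mod_cast Nat.mul_div_le n 8
  have hr₂ : (n : ℝ) < 8 * r + 8 := by exact_mod_cast Nat.lt_mul_div_succ n (by norm_num : 0 < 8)
  set ρ := (r : ℝ) + 2 * δ + 1
  have ha' : wordLength S a = n := by simp [wordLength, ha]
  suffices ∃ g ∈ C, ∃ h ∈ C, n - 2 * r ≤ wordLength S g ∧ n - 2 * r ≤ wordLength S h ∧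
      gromovProd S g⁻¹ h ≤ ρ ∧ gromovProd S g h⁻¹ ≤ ρ by
    obtain ⟨g, hg, h, hh, hg', hh', hgh, hhg⟩ := this
    refine ⟨g, hg, h, hh, ?_⟩
    have := hS.le_tlen_wordDist_mul hδ ⟨hg', hle g hg⟩ ⟨hh', hle h hh⟩ hgh hhg (by linarith)
    linarith
  by_cases haa : gromovProd S a a⁻¹ ≤ ρ
  · exact ⟨a, haC, a, haC, by linarith, by linarith, by rwa [hS.gromovProd_comm], haa⟩
  obtain ⟨u, huC, hu, hau⟩ := hS.exists_mem_gromovProd_inv_lt hδ hC hle hmin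
    (a := a) (r := r) (by rw [ha]; exact Nat.div_le_self n 8) (by linarith) (by linarith)
  have hau' : gromovProd S u⁻¹ a < r := by rwa [hS.gromovProd_comm]
  by_cases hua : gromovProd S u a⁻¹ ≤ ρ
  · exact ⟨u, huC, a, haC, hu, by linarith, by linarith, hua⟩
  have hua' : ρ - δ ≤ gromovProd S u a := by
    have := hS.min_gromovProd_sub_le hδ u a⁻¹ a
    rw [hS.gromovProd_comm a⁻¹ a] at this
    linarith [le_min (not_le.1 hua).le (not_le.1 haa).le]
  have huu : gromovProd S u⁻¹ u ≤ ρ := by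
    linarith [hS.gromovProd_le_of_lt hδ (x := u⁻¹) (y := u) (z := a) (by linarith)]
  exact ⟨u, huC, u, huC, hu, hu, huu, by rwa [hS.gromovProd_comm]⟩

/-- A form of the Breuillard–Fujiwara inequality for word metrics. -/
theorem exists_conj_wordLength_le {T : Finset G} (hT : ∀ t ∈ T, t⁻¹ ∈ T) {M : ℝ}
    (hM : ∀ u ∈ T, ∀ v ∈ T, tlen (wordDist S) (u * v) ≤ M) :
    ∃ x : G, ∀ t ∈ T, wordLength S (x⁻¹ * t * x) ≤ max (100 * (δ + 1)) (M + 14 * δ + 4) := by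
  classical
  rcases T.eq_empty_or_nonempty with rfl | hTne
  · exact ⟨1, by simp⟩
  set f : G → ℕ := fun x => T.sup fun t => wordNorm S (x⁻¹ * t * x)
  set x₀ := Function.argmin f
  set C := T.image fun t => x₀⁻¹ * t * x₀
  have hC : ∀ c ∈ C, c⁻¹ ∈ C := by
    simp only [C, Finset.mem_image, forall_exists_index, and_imp, forall_apply_eq_imp_iff₂]
    exact fun t ht => ⟨t⁻¹, hT t ht, by group⟩
  have hle : ∀ c ∈ C, wordLength S c ≤ f x₀ := by
    simp only [C, Finset.mem_image, forall_exists_index, and_imp, forall_apply_eq_imp_iff₂]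
    exact fun t ht => by
      unfold wordLength
      exact_mod_cast Finset.le_sup (f := fun t => wordNorm S (x₀⁻¹ * t * x₀)) ht
  have hmin : ∀ x, ∃ c ∈ C, f x₀ ≤ wordLength S (x⁻¹ * c * x) := by
    intro x
    obtain ⟨t, ht, hft⟩ := T.exists_mem_eq_sup hTne fun t => wordNorm S ((x₀ * x)⁻¹ * t * (x₀ * x))
    refine ⟨x₀⁻¹ * t * x₀, Finset.mem_image_of_mem _ ht, ?_⟩
    have : f x₀ ≤ wordNorm S ((x₀ * x)⁻¹ * t * (x₀ * x)) :=
      (Function.argmin_le f (x₀ * x)).trans hft.le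
    rw [show x⁻¹ * (x₀⁻¹ * t * x₀) * x = (x₀ * x)⁻¹ * t * (x₀ * x) by group, wordLength]
    exact_mod_cast this
  refine ⟨x₀, fun t ht => (hle _ (Finset.mem_image_of_mem _ ht)).trans ?_⟩
  rcases le_or_gt (f x₀ : ℝ) (100 * (δ + 1)) with hsmall | hlarge
  · exact le_max_of_le_left hsmall
  obtain ⟨a, ha, hfa⟩ := T.exists_mem_eq_sup hTne fun t => wordNorm S (x₀⁻¹ * t * x₀)
  obtain ⟨g, hg, h, hh, hgh⟩ := hS.exists_mem_le_tlen_mul hδ hC hle hmin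
    (Finset.mem_image_of_mem _ ha) hfa.symm hlarge
  simp only [C, Finset.mem_image] at hg hh
  obtain ⟨u, hu, rfl⟩ := hg
  obtain ⟨v, hv, rfl⟩ := hh
  have hconj : x₀⁻¹ * u * x₀ * (x₀⁻¹ * v * x₀) = x₀⁻¹ * (u * v) * x₀ := by group
  rw [hconj] at hgh
  exact le_max_of_le_right (by linarith [hS.tlen_wordDist_conj_le x₀ (u * v), hM u hu v hv])

end GenSymm

end Displacement

theorem MulAut.conj_apply_mul (φ : MulAut G) (x : G) :
    MulAut.conj (φ x) * φ = φ * MulAut.conj x := by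
  ext y
  simp [MulAut.conj_apply]

theorem GenSymm.exists_finset_eq_mul_conj {S : Finset G} (hS : GenSymm (S : Set G)) {δ : ℝ}
    (hδ : GromovHyperbolic (wordDist (S : Set G)) δ) {P : ℝ} (hP : 0 ≤ P) :
    ∃ Φ : Finset (MulAut G), ∀ χ : MulAut G,
      (∃ Q, ∀ g, wordLength S (χ g) ≤ P * wordLength S g + Q) →
        ∃ φ ∈ Φ, ∃ g : G, χ = φ * MulAut.conj g := by
  classical
  set N := ⌊max (100 * (δ + 1)) (2 * P + 14 * δ + 4)⌋₊
  refine ⟨(hS.finite_setOf_mulAut N).toFinset, fun χ ⟨Q, hQ⟩ => ?_⟩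
  set T := S.image χ
  have hT : ∀ t ∈ T, t⁻¹ ∈ T := by
    simp only [T, Finset.mem_image, forall_exists_index, and_imp, forall_apply_eq_imp_iff₂]
    exact fun s hs => ⟨s⁻¹, hS.1 s hs, map_inv χ s⟩
  have hM : ∀ u ∈ T, ∀ v ∈ T, tlen (wordDist S) (u * v) ≤ 2 * P := by
    simp only [T, Finset.mem_image, forall_exists_index, and_imp, forall_apply_eq_imp_iff₂]
    intro s hs s' hs'
    have hss' : tlen (wordDist S) (s * s') ≤ 2 := by
      linarith [hS.tlen_wordDist_le_wordLength (s * s'), hS.wordLength_mul_le s s',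
        wordLength_le_one_of_mem (S := (S : Set G)) hs,
        wordLength_le_one_of_mem (S := (S : Set G)) hs']
    calc tlen (wordDist S) (χ s * χ s')
        ≤ P * tlen (wordDist S) (s * s') := by
          rw [← map_mul]
          exact hS.tlen_wordDist_le_of_wordLength_pow_le hP fun n => by rw [← map_pow]; exact hQ _
      _ ≤ 2 * P := by nlinarith
  obtain ⟨x, hx⟩ := hS.exists_conj_wordLength_le hδ hT hM
  refine ⟨MulAut.conj x⁻¹ * χ, ?_, (MulAut.conj x⁻¹ * χ)⁻¹ x, ?_⟩
  · rw [Set.Finite.mem_toFinset]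
    intro s hs
    apply Nat.le_floor
    simpa [MulAut.conj_apply, wordLength] using hx (χ s) (Finset.mem_image_of_mem _ hs)
  · rw [← MulAut.conj_apply_mul, MulAut.apply_inv_self, ← mul_assoc, ← map_mul, mul_inv_cancel,
      map_one, one_mul]

theorem IsPseudometric.nonneg {d : X → X → ℝ} (hd : IsPseudometric d) (x y : X) :
    0 ≤ d x y := by
  linarith [hd.1 x, hd.2.1 y x, hd.2.2 x y x]

theorem QIsometric.trans {d₁ d₂ d₃ : X → X → ℝ} (h₁₂ : QIsometric d₁ d₂)
    (h₂₃ : QIsometric d₂ d₃) : QIsometric d₁ d₃ := by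
  obtain ⟨a₁, b₁, e₁, ha₁, hb₁, he₁, h₁⟩ := h₁₂
  obtain ⟨a₂, b₂, e₂, ha₂, hb₂, he₂, h₂⟩ := h₂₃
  refine ⟨a₁ * a₂, b₂ * b₁, e₁ / a₂ + b₂ * e₁ + e₂, by positivity, by positivity, by positivity,
    fun x y => ⟨?_, ?_⟩⟩
  · have h : (d₁ x y / a₁ - e₁) / a₂ ≤ d₂ x y / a₂ := by gcongr; exact (h₁ x y).1
    have : d₁ x y / (a₁ * a₂) = d₁ x y / a₁ / a₂ := by rw [div_div]
    have : 0 ≤ b₂ * e₁ := by positivity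
    rw [sub_div] at h
    linarith [(h₂ x y).1]
  · have h : b₂ * d₂ x y ≤ b₂ * (b₁ * d₁ x y + e₁) := by gcongr; exact (h₁ x y).2
    have : 0 ≤ e₁ / a₂ := by positivity
    linarith [(h₂ x y).2]

theorem GenSymm.qIsometric_wordDist {S T : Finset G} (hS : GenSymm (S : Set G))
    (hT : GenSymm (T : Set G)) : QIsometric (wordDist (S : Set G)) (wordDist (T : Set G)) := by
  obtain ⟨κ, hκ, hST⟩ := hS.exists_wordLength_map_le hT (MonoidHom.id G)
  obtain ⟨κ', hκ', hTS⟩ := hT.exists_wordLength_map_le hS (MonoidHom.id G)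
  refine ⟨κ', κ, 0, hκ', hκ, le_rfl, fun x y => ⟨?_, ?_⟩⟩
  · rw [sub_zero, div_le_iff₀' hκ']
    exact hTS (x⁻¹ * y)
  · rw [add_zero]
    exact hST (x⁻¹ * y)

theorem GenSymm.exists_dist_map_le {S : Finset G} (hS : GenSymm (S : Set G))
    {d : G → G → ℝ} (hqi : QIsometric (wordDist (S : Set G)) d) (θ : MulAut G) :
    ∃ P Q : ℝ, 0 < P ∧ 0 ≤ Q ∧ ∀ x y, d (θ x) (θ y) ≤ P * d x y + Q := by
  obtain ⟨a, b, e, ha, hb, he, h⟩ := hqi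
  obtain ⟨κ, hκ, hθ⟩ := hS.exists_wordLength_map_le hS θ.toMonoidHom
  refine ⟨b * κ * a, b * κ * a * e + e, by positivity, by positivity, fun x y => ?_⟩
  have h₁ : d (θ x) (θ y) ≤ b * wordLength S (θ (x⁻¹ * y)) + e := by
    simpa [wordDist, wordLength] using (h (θ x) (θ y)).2
  have h₂ : wordLength S (x⁻¹ * y) ≤ a * (d x y + e) := by
    have := (h x y).1
    rw [sub_le_iff_le_add, div_le_iff₀ ha] at this
    simpa [wordDist, wordLength, mul_comm] using this
  have h₃ : b * wordLength S (θ (x⁻¹ * y)) ≤ b * (κ * (a * (d x y + e))) := by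
    gcongr
    exact (hθ _).trans (by gcongr)
  linarith

theorem GenSymm.qIsometric_pull {S : Finset G} (hS : GenSymm (S : Set G))
    {d : G → G → ℝ} (hqi : QIsometric (wordDist (S : Set G)) d) (ψ : MulAut G) :
    QIsometric (pull ψ d) d := by
  obtain ⟨P₁, Q₁, hP₁, hQ₁, h₁⟩ := hS.exists_dist_map_le hqi ψ⁻¹
  obtain ⟨P₂, Q₂, hP₂, hQ₂, h₂⟩ := hS.exists_dist_map_le hqi ψ
  refine ⟨P₁, P₂, Q₁ / P₁ + Q₂, hP₁, hP₂, by positivity, fun x y => ⟨?_, ?_⟩⟩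
  · have : pull ψ d x y ≤ P₁ * d x y + Q₁ := h₁ x y
    rw [sub_le_iff_le_add, div_le_iff₀ hP₁, add_mul, add_mul, div_mul_cancel₀ _ hP₁.ne']
    nlinarith
  · have := h₂ (ψ⁻¹ x) (ψ⁻¹ y)
    simp only [MulAut.apply_inv_self] at this
    have : 0 ≤ Q₁ / P₁ := by positivity
    change d x y ≤ P₂ * d (ψ⁻¹ x) (ψ⁻¹ y) + (Q₁ / P₁ + Q₂)
    linarith

theorem wordLength_map_le_of_dist_le {S : Set G} {d : G → G → ℝ} {l₁ l₂ e c A : ℝ}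
    (hl₁ : 0 < l₁) (hc : 0 ≤ c)
    (hqi : ∀ x y, wordDist S x y / l₁ - e ≤ d x y ∧ d x y ≤ l₂ * wordDist S x y + e)
    {χ : G → G} (hχ : ∀ g, d 1 (χ g) ≤ c * d 1 g + A) (g : G) :
    wordLength S (χ g) ≤ l₁ * c * l₂ * wordLength S g + l₁ * (c * e + A + e) := by
  have h₁ := (hqi 1 (χ g)).1
  rw [wordDist_one_left, sub_le_iff_le_add, div_le_iff₀ hl₁] at h₁
  have h₂ := (hqi 1 g).2
  rw [wordDist_one_left] at h₂
  have h₃ : c * d 1 g ≤ c * (l₂ * wordLength S g + e) := by gcongr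
  nlinarith [hχ g]

theorem exists_lt_of_log_Lam_le {d₁ d₂ : X → X → ℝ} (hqi : QIsometric d₂ d₁) {R : ℝ}
    (h : Real.log (Lam d₁ d₂) ≤ R) :
    ∃ l₁ l₂ A : ℝ, 0 < l₁ ∧ 0 < l₂ ∧ 0 ≤ A ∧ l₁ * l₂ < Real.exp R + 1 ∧
      ∀ x y : X, d₂ x y / l₁ - A ≤ d₁ x y ∧ d₁ x y ≤ l₂ * d₂ x y + A := by
  obtain ⟨l₁, l₂, A, hl₁, hl₂, hA, hl⟩ := hqi
  have hbdd : BddBelow {l : ℝ | ∃ l₁ l₂ A : ℝ, 0 < l₁ ∧ 0 < l₂ ∧ 0 ≤ A ∧ l = l₁ * l₂ ∧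
      ∀ x y : X, d₂ x y / l₁ - A ≤ d₁ x y ∧ d₁ x y ≤ l₂ * d₂ x y + A} := by
    refine ⟨0, ?_⟩
    rintro _ ⟨l₁, l₂, A, hl₁, hl₂, -, rfl, -⟩
    positivity
  have hlt : Lam d₁ d₂ < Real.exp R + 1 :=
    ((Real.le_exp_log _).trans (Real.exp_le_exp.2 h)).trans_lt (lt_add_one _)
  obtain ⟨_, ⟨l₁, l₂, A, hl₁, hl₂, hA, rfl, hl⟩, hlt⟩ :=
    (csInf_lt_iff hbdd ⟨_, l₁, l₂, A, hl₁, hl₂, hA, rfl, hl⟩).1 hlt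
  exact ⟨l₁, l₂, A, hl₁, hl₂, hA, hlt, hl⟩

/-- The two quasi-isometry constants have product below `e^R + 1`, so one of them is at most
`e^R + 1`. -/
theorem exists_dist_one_map_le_of_log_Lam_le {d : G → G → ℝ} (hd : ∀ x y, 0 ≤ d x y)
    {ψ : MulAut G} (hqi : QIsometric (pull ψ d) d) {R : ℝ}
    (h : Real.log (Lam d (pull ψ d)) ≤ R) :
    ∃ χ : MulAut G, (χ = ψ ∨ χ = ψ⁻¹) ∧ ∃ A, ∀ g, d 1 (χ g) ≤ (Real.exp R + 1) * d 1 g + A := by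
  obtain ⟨l₁, l₂, A, hl₁, hl₂, hA, hlt, hl⟩ := exists_lt_of_log_Lam_le hqi h
  have hL : 1 ≤ Real.exp R + 1 := by linarith [Real.exp_pos R]
  by_cases hl₂L : l₂ ≤ Real.exp R + 1
  · refine ⟨ψ, .inl rfl, A, fun g => ?_⟩
    have := (hl 1 (ψ g)).2
    simp only [pull, map_one, MulEquiv.symm_apply_apply] at this
    nlinarith [hd 1 g]
  · have hl₁L : l₁ ≤ Real.exp R + 1 := by
      by_contra hl₁L
      nlinarith
    refine ⟨ψ⁻¹, .inr rfl, l₁ * A, fun g => ?_⟩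
    have := (hl 1 g).1
    simp only [pull, map_one] at this
    rw [sub_le_iff_le_add, div_le_iff₀ hl₁] at this
    rw [MulAut.inv_apply]
    nlinarith [hd 1 g]

theorem out_action_metrically_proper_general (G : Type*) [Group G]
    (hG : IsHyperbolicGroup G)
    (d : G → G → ℝ) (hd : InD d) (R : ℝ) :
    ∃ F : Finset (MulAut G), ∀ ψ : MulAut G,
      Real.log (Lam d (pull ψ d)) ≤ R → ∃ φ ∈ F, ∃ g : G, ψ = φ * MulAut.conj g := by
  classical
  obtain ⟨S₀, hS₀, δ, -, hδ⟩ := hG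
  obtain ⟨hpm, -, -, S, hS, hqi⟩ := hd
  have hqi₀ := (hS₀.qIsometric_wordDist hS).trans hqi
  obtain ⟨l₁, l₂, e, hl₁, hl₂, -, hqi₀'⟩ := id hqi₀
  obtain ⟨Φ, hΦ⟩ := hS₀.exists_finset_eq_mul_conj hδ
    (P := l₁ * (Real.exp R + 1) * l₂) (by positivity)
  refine ⟨Φ ∪ Φ.image (·⁻¹), fun ψ hψ => ?_⟩
  obtain ⟨χ, hχψ, A, hχ⟩ :=
    exists_dist_one_map_le_of_log_Lam_le hpm.nonneg (hS₀.qIsometric_pull hqi₀ ψ) hψ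
  obtain ⟨φ, hφ, g, rfl⟩ :=
    hΦ χ ⟨_, wordLength_map_le_of_dist_le hl₁ (by positivity) hqi₀' hχ⟩
  rcases hχψ with rfl | hinv
  · exact ⟨φ, Finset.mem_union_left _ hφ, g, rfl⟩
  · refine ⟨φ⁻¹, Finset.mem_union_right _ (Finset.mem_image_of_mem _ hφ), φ g⁻¹, ?_⟩
    rw [← inv_inv ψ, ← hinv, mul_inv_rev, ← map_inv, ← MulAut.conj_apply_mul,
      MulAut.inv_apply_self]

/-- The action of `Out(G)` on `(𝒟(G), Δ)` is metrically proper: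
for any `ρ = [d]` and `R ≥ 0` there are finitely many outer classes (represented by a
finite set `F` of automorphisms, up to inner automorphisms) containing every `ψ` with
`Δ(ρ, ψ(ρ)) = log Λ(d, ψ(d)) ≤ R`. -/
theorem out_action_metrically_proper (G : Type*) [Group G]
    (hG : IsHyperbolicGroup G) (hne : NonElementary G)
    (d : G → G → ℝ) (hd : InD d) (R : ℝ) (hR : 0 ≤ R) :
    ∃ F : Finset (MulAut G), ∀ ψ : MulAut G,
      Real.log (Lam d (pull ψ d)) ≤ R → ∃ φ ∈ F, ∃ g : G, ψ = φ * MulAut.conj g :=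
  out_action_metrically_proper_general G hG d hd R

end
end

section
/- Let G be a non-elementary hyperbolic group and d, d' two left-invariant hyperbolic pseudometrics quasi-isometric to word metrics, with Manhattan curves Θ_n for pairs (d_n, d'_n) and Θ for (d, d'). If there are sequences Λ_n → 1 and C_n ≥ 0 with Λ_n^{-1}d − C_n ≤ d_n ≤ Λ_n d + C_n and Λ_n^{-1}d' − C_n ≤ d'_n ≤ Λ_n d' + C_n, and all Θ_n and Θ are convex and continuously differentiable, then Θ_n converges pointwise to Θ and Θ'_n converges pointwise to Θ'. -/
open Filter Set MeasureTheory Topology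

noncomputable section

variable {X : Type*}

variable {G : Type*} [Group G]

/-- The Manhattan curve of the pair `(d, d')`: `Θ(a)` is the critical exponent in `b`
of the series `Σ_{x∈G} exp(−a·d'(x,1) − b·d(x,1))`. -/
def ManhattanTheta (d d' : G → G → ℝ) (a : ℝ) : ℝ :=
  sInf {b : ℝ | Summable (fun x : G => Real.exp (-(a * d' x 1) - b * d x 1))}


/-!
`Θ(a)` is a genuine infimum: the series diverges for very negative `b` because `G` is infinite, and
it converges for large `b` because word balls grow at most exponentially. Comparing the series term
by term, the bounds `Λ⁻¹d − C ≤ dₙ ≤ Λd + C` rescale every exponent by a factor between `Λ⁻¹` and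
`Λ` up to a bounded error, so with the order automorphism `σ(t) = max(Λt, Λ⁻¹t)` of `ℝ`,
`σ⁻¹(Θ(σ a)) ≤ Θₙ(a) ≤ σ(Θ(σ⁻¹ a))`. As `Λₙ → 1`, continuity of `Θ` squeezes `Θₙ(a)` to `Θ(a)`.
The derivative of a convex function at `a` lies between its difference quotients on either side of
`a`, and these converge, so the derivatives converge too.
-/

theorem GenSymm.exists_word {S : Set G} (hS : GenSymm S) (x : G) :
    ∃ f : Fin (wordNorm S x) → G, (∀ i, f i ∈ S) ∧ (List.ofFn f).prod = x := by
  refine Nat.sInf_mem (s := {k | ∃ f : Fin k → G, (∀ i, f i ∈ S) ∧ (List.ofFn f).prod = x}) ?_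
  have hx : x ∈ (Subgroup.closure S).toSubmonoid := by simp [hS.2]
  rw [Subgroup.closure_toSubmonoid,
    Set.union_eq_left.2 fun s hs => inv_inv s ▸ hS.1 s⁻¹ hs] at hx
  obtain ⟨L, hLS, rfl⟩ := Submonoid.exists_list_of_mem_closure hx
  exact ⟨L.length, L.get, fun i => hLS _ (L.get_mem i), by rw [List.ofFn_get]⟩

theorem summable_pow_wordNorm {S : Finset G} (hS : GenSymm (S : Set G)) {r : ℝ} (hr : 0 ≤ r)
    (hSr : S.card * r < 1) : Summable fun x : G => r ^ wordNorm (S : Set G) x := by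
  -- There are `card S ^ k` words of length `k`, and `x` injects into them via a shortest word.
  have hwords : Summable fun w : (k : ℕ) × (Fin k → S) => r ^ w.1 := by
    refine (summable_sigma_of_nonneg fun _ => by positivity).2
      ⟨fun _ => Summable.of_finite, ?_⟩
    simp only [tsum_fintype, Finset.sum_const, Finset.card_univ, Fintype.card_fun,
      Fintype.card_coe, Fintype.card_fin, nsmul_eq_mul, Nat.cast_pow, ← mul_pow]
    exact summable_geometric_of_lt_one (by positivity) hSr
  choose f hfS hf using hS.exists_word
  have hinj : Function.Injective fun x : G =>
      (⟨_, fun i => ⟨f x i, hfS x i⟩⟩ : (k : ℕ) × (Fin k → S)) :=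
    Function.LeftInverse.injective (g := fun w => (List.ofFn fun i => (w.2 i : G)).prod)
      fun x => hf x
  exact hwords.comp_injective hinj

theorem NonElementary.infinite (h : NonElementary G) : Infinite G := by
  by_contra hfin
  rw [not_infinite_iff_finite] at hfin
  exact h ⟨⊥, inferInstance, fun a ha b hb => by rw [Subgroup.mem_bot.1 ha, Subgroup.mem_bot.1 hb]⟩

section LeftInvariant

variable {d : G → G → ℝ}

theorem LeftInvariant.dist_one_list_prod_le (hd : IsPseudometric d) (hinv : LeftInvariant d)
    {M : ℝ} (L : List G) (hL : ∀ g ∈ L, d 1 g ≤ M) : d 1 L.prod ≤ L.length * M := by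
  induction L with
  | nil => simp [hd.1]
  | cons g L ih =>
    have htri := hd.2.2 1 g (g * L.prod)
    rw [show d g (g * L.prod) = d 1 L.prod by simpa using hinv g 1 L.prod] at htri
    simp only [List.prod_cons, List.length_cons, Nat.cast_succ]
    linarith [hL g List.mem_cons_self, ih fun h hh => hL h (List.mem_cons_of_mem g hh)]

theorem LeftInvariant.dist_one_le_mul_wordNorm (hd : IsPseudometric d) (hinv : LeftInvariant d)
    {S : Finset G} (hS : GenSymm (S : Set G)) (x : G) :
    d 1 x ≤ (∑ s ∈ S, d 1 s) * wordNorm (S : Set G) x := by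
  obtain ⟨f, hfS, hfx⟩ := hS.exists_word x
  have h := hinv.dist_one_list_prod_le hd (List.ofFn f) fun g hg => by
    obtain ⟨i, rfl⟩ := List.mem_ofFn.1 hg
    exact Finset.single_le_sum (fun s _ => hd.nonneg 1 s) (hfS i)
  rwa [hfx, List.length_ofFn, mul_comm] at h

end LeftInvariant

section InD

variable {d d' : G → G → ℝ}

theorem InD.exists_wordNorm_le (hd : InD d) : ∃ S : Finset G, GenSymm (S : Set G) ∧
    ∃ l e : ℝ, ∀ x, (wordNorm (S : Set G) x : ℝ) ≤ l * (d x 1 + e) := by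
  obtain ⟨pd, -, -, S, hS, l1, _, e, hl1, _, _, hQI⟩ := hd
  refine ⟨S, hS, l1, e, fun x => ?_⟩
  have h := (hQI 1 x).1
  rw [wordDist, inv_one, one_mul, pd.2.1 1 x] at h
  rw [← div_le_iff₀' hl1]
  linarith

theorem InD.exists_le_mul_add (hd : InD d) (pd' : IsPseudometric d') (hinv' : LeftInvariant d') :
    ∃ K L : ℝ, ∀ x, d' x 1 ≤ K * d x 1 + L := by
  obtain ⟨S, hS, l, e, hw⟩ := hd.exists_wordNorm_le
  set M := ∑ s ∈ S, d' 1 s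
  refine ⟨M * l, M * l * e, fun x => ?_⟩
  calc d' x 1 = d' 1 x := pd'.2.1 x 1
    _ ≤ M * wordNorm (S : Set G) x := hinv'.dist_one_le_mul_wordNorm pd' hS x
    _ ≤ M * (l * (d x 1 + e)) :=
      mul_le_mul_of_nonneg_left (hw x) (Finset.sum_nonneg fun s _ => pd'.nonneg 1 s)
    _ = M * l * d x 1 + M * l * e := by ring

theorem InD.exists_summable_exp (hd : InD d) :
    ∃ β : ℝ, Summable fun x => Real.exp (-(β * d x 1)) := by
  obtain ⟨S, hS, l, e, hw⟩ := hd.exists_wordNorm_le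
  -- At most `N ^ k` elements have word length `k`, so `β = l log (N + 1)` beats this growth.
  set N : ℝ := (S.card : ℝ)
  have hN0 : 0 ≤ N := Nat.cast_nonneg _
  have hN : 0 < N + 1 := by positivity
  have hsum := (summable_pow_wordNorm hS (inv_nonneg.2 hN.le)
    ((mul_inv_lt_iff₀ hN).2 (by linarith))).mul_left (Real.exp (l * Real.log (N + 1) * e))
  refine ⟨l * Real.log (N + 1), hsum.of_nonneg_of_le (fun _ => (Real.exp_pos _).le) fun x => ?_⟩
  rw [← Real.exp_log hN, ← Real.exp_neg, ← Real.exp_nat_mul, ← Real.exp_add, Real.exp_log hN]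
  refine Real.exp_le_exp.2 ?_
  nlinarith [mul_le_mul_of_nonneg_right (hw x) (Real.log_nonneg (le_add_of_nonneg_left hN0))]

end InD

section ConvergenceSet

variable {d d' : G → G → ℝ}

def convergenceSet (d d' : G → G → ℝ) (a : ℝ) : Set ℝ :=
  {b | Summable fun x => Real.exp (-(a * d' x 1) - b * d x 1)}

theorem manhattanTheta_eq_sInf (d d' : G → G → ℝ) (a : ℝ) :
    ManhattanTheta d d' a = sInf (convergenceSet d d' a) := rfl

theorem convergenceSet_nonempty (hd : InD d) (hd' : InD d') (a : ℝ) :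
    (convergenceSet d d' a).Nonempty := by
  obtain ⟨K, L, hKL⟩ := hd.exists_le_mul_add hd'.1 hd'.2.1
  obtain ⟨β, hβ⟩ := hd.exists_summable_exp
  refine ⟨|a| * K + β, (hβ.mul_left (Real.exp (|a| * L))).of_nonneg_of_le
    (fun _ => (Real.exp_pos _).le) fun x => ?_⟩
  rw [← Real.exp_add]
  refine Real.exp_le_exp.2 ?_
  have h : -(a * d' x 1) ≤ |a| * d' x 1 := by
    simpa [abs_mul, abs_of_nonneg (hd'.1.nonneg x 1)] using neg_le_abs (a * d' x 1)
  nlinarith [mul_le_mul_of_nonneg_left (hKL x) (abs_nonneg a)]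

/-- On a finite group every exponent converges and `ManhattanTheta` is the junk `sInf univ = 0`. -/
theorem convergenceSet_bddBelow [Infinite G] (hd : InD d) (hd' : InD d') (a : ℝ) :
    BddBelow (convergenceSet d d' a) := by
  obtain ⟨K, L, hKL⟩ := hd.exists_le_mul_add hd'.1 hd'.2.1
  refine ⟨-(|a| * K), fun b hb => ?_⟩
  by_contra! hbK
  have hlow : ∀ x, Real.exp (-(|a| * L)) ≤ Real.exp (-(a * d' x 1) - b * d x 1) := fun x => by
    refine Real.exp_le_exp.2 ?_
    have h : -(|a| * d' x 1) ≤ -(a * d' x 1) := by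
      simpa [abs_mul, abs_of_nonneg (hd'.1.nonneg x 1)] using le_abs_self (a * d' x 1)
    nlinarith [mul_le_mul_of_nonneg_left (hKL x) (abs_nonneg a), hd.1.nonneg x 1]
  exact (Real.exp_pos _).ne' <| (summable_const_iff _).1 <|
    hb.of_nonneg_of_le (fun _ => (Real.exp_pos _).le) hlow

end ConvergenceSet

section Scaling

variable {Λ C : ℝ}

def ScaleClose (Λ C : ℝ) (f g : X → ℝ) : Prop :=
  ∀ x, Λ⁻¹ * f x - C ≤ g x ∧ g x ≤ Λ * f x + C

def stretch (Λ t : ℝ) : ℝ := max (Λ * t) (Λ⁻¹ * t)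

def shrink (Λ t : ℝ) : ℝ := min (Λ * t) (Λ⁻¹ * t)

theorem stretch_mono (hΛ : 0 < Λ) : Monotone (stretch Λ) := fun _ _ h =>
  max_le_max (mul_le_mul_of_nonneg_left h hΛ.le) (mul_le_mul_of_nonneg_left h (inv_pos.2 hΛ).le)

theorem shrink_mono (hΛ : 0 < Λ) : Monotone (shrink Λ) := fun _ _ h =>
  min_le_min (mul_le_mul_of_nonneg_left h hΛ.le) (mul_le_mul_of_nonneg_left h (inv_pos.2 hΛ).le)

theorem shrink_stretch (hΛ : 0 < Λ) (t : ℝ) : shrink Λ (stretch Λ t) = t := by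
  have h₁ : Λ * (Λ⁻¹ * t) = t := by field_simp
  have h₂ : Λ⁻¹ * (Λ * t) = t := by field_simp
  rcases le_total (Λ * t) (Λ⁻¹ * t) with h | h
  · rw [stretch, max_eq_right h, shrink, h₁, min_eq_left]
    linarith [mul_le_mul_of_nonneg_left h (inv_pos.2 hΛ).le]
  · rw [stretch, max_eq_left h, shrink, h₂, min_eq_right]
    linarith [mul_le_mul_of_nonneg_left h hΛ.le]

theorem stretch_shrink (hΛ : 0 < Λ) (t : ℝ) : stretch Λ (shrink Λ t) = t := by
  have h₁ : Λ * (Λ⁻¹ * t) = t := by field_simp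
  have h₂ : Λ⁻¹ * (Λ * t) = t := by field_simp
  rcases le_total (Λ * t) (Λ⁻¹ * t) with h | h
  · rw [shrink, min_eq_left h, stretch, h₂, max_eq_right]
    linarith [mul_le_mul_of_nonneg_left h hΛ.le]
  · rw [shrink, min_eq_right h, stretch, h₁, max_eq_left]
    linarith [mul_le_mul_of_nonneg_left h (inv_pos.2 hΛ).le]

def stretchIso (hΛ : 0 < Λ) : ℝ ≃o ℝ where
  toFun := stretch Λ
  invFun := shrink Λ
  left_inv := shrink_stretch hΛ
  right_inv := stretch_shrink hΛ
  map_rel_iff' {s t} := by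
    change stretch Λ s ≤ stretch Λ t ↔ s ≤ t
    exact ⟨fun h => by simpa only [shrink_stretch hΛ] using shrink_mono hΛ h,
      fun h => stretch_mono hΛ h⟩

theorem coe_stretchIso (hΛ : 0 < Λ) : ⇑(stretchIso hΛ) = stretch Λ := rfl

theorem tendsto_stretch {α : Type*} {l : Filter α} {Λ u : α → ℝ} {t : ℝ}
    (hΛ : Tendsto Λ l (𝓝 1)) (hu : Tendsto u l (𝓝 t)) :
    Tendsto (fun n => stretch (Λ n) (u n)) l (𝓝 t) := by
  simpa [stretch] using (hΛ.mul hu).max ((hΛ.inv₀ one_ne_zero).mul hu)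

theorem tendsto_shrink {α : Type*} {l : Filter α} {Λ u : α → ℝ} {t : ℝ}
    (hΛ : Tendsto Λ l (𝓝 1)) (hu : Tendsto u l (𝓝 t)) :
    Tendsto (fun n => shrink (Λ n) (u n)) l (𝓝 t) := by
  simpa [shrink] using (hΛ.mul hu).min ((hΛ.inv₀ one_ne_zero).mul hu)

theorem ScaleClose.symm {f g : X → ℝ} (hΛ : 0 < Λ) (h : ScaleClose Λ C f g) :
    ScaleClose Λ (stretch Λ C) g f := fun x => by
  obtain ⟨hlow, hup⟩ := h x
  have hinv : 0 < Λ⁻¹ := inv_pos.2 hΛ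
  have hC₁ : Λ * C ≤ stretch Λ C := le_max_left _ _
  have hC₂ : Λ⁻¹ * C ≤ stretch Λ C := le_max_right _ _
  constructor
  · have := mul_le_mul_of_nonneg_left hup hinv.le
    rw [mul_add, ← mul_assoc, inv_mul_cancel₀ hΛ.ne', one_mul] at this
    linarith
  · have := mul_le_mul_of_nonneg_left hlow hΛ.le
    rw [mul_sub, ← mul_assoc, mul_inv_cancel₀ hΛ.ne', one_mul] at this
    linarith

theorem ScaleClose.shrink_mul_sub_le {f g : X → ℝ} (h : ScaleClose Λ C f g) {x : X}
    (hx : 0 ≤ f x) (a : ℝ) : shrink Λ a * f x - |a| * C ≤ a * g x := by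
  obtain ⟨hlow, hup⟩ := h x
  rcases le_total 0 a with ha | ha
  · have := mul_le_mul_of_nonneg_left hlow ha
    have := mul_le_mul_of_nonneg_right (min_le_right (Λ * a) (Λ⁻¹ * a)) hx
    rw [shrink, abs_of_nonneg ha]
    nlinarith
  · have := mul_le_mul_of_nonpos_left hup ha
    have := mul_le_mul_of_nonneg_right (min_le_left (Λ * a) (Λ⁻¹ * a)) hx
    rw [shrink, abs_of_nonpos ha]
    nlinarith

end Scaling

section Comparison

variable {d d' e e' : G → G → ℝ} {Λ C : ℝ}

theorem stretch_mem_convergenceSet (pd : IsPseudometric d) (pd' : IsPseudometric d')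
    (hΛ : 0 < Λ) (he : ScaleClose Λ C (d · 1) (e · 1)) (he' : ScaleClose Λ C (d' · 1) (e' · 1))
    {a b : ℝ} (hb : b ∈ convergenceSet d d' (shrink Λ a)) :
    stretch Λ b ∈ convergenceSet e e' a := by
  refine (hb.mul_left (Real.exp ((|a| + |stretch Λ b|) * C))).of_nonneg_of_le
    (fun _ => (Real.exp_pos _).le) fun x => ?_
  rw [← Real.exp_add]
  refine Real.exp_le_exp.2 ?_
  have h' := he'.shrink_mul_sub_le (pd'.nonneg x 1) a
  have h := he.shrink_mul_sub_le (pd.nonneg x 1) (stretch Λ b)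
  rw [shrink_stretch hΛ] at h
  linarith

theorem manhattanTheta_le_stretch [Infinite G] (hd : InD d) (hd' : InD d') (he : InD e)
    (he' : InD e') (hΛ : 0 < Λ) (hclose : ScaleClose Λ C (d · 1) (e · 1))
    (hclose' : ScaleClose Λ C (d' · 1) (e' · 1)) (a : ℝ) :
    ManhattanTheta e e' a ≤ stretch Λ (ManhattanTheta d d' (shrink Λ a)) := by
  have hne := convergenceSet_nonempty hd hd' (shrink Λ a)
  have hinf := (stretchIso hΛ).map_csInf' hne (convergenceSet_bddBelow hd hd' _)
  rw [coe_stretchIso] at hinf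
  rw [manhattanTheta_eq_sInf, manhattanTheta_eq_sInf, hinf]
  refine csInf_le_csInf (convergenceSet_bddBelow he he' a) (hne.image _) ?_
  rintro _ ⟨b, hb, rfl⟩
  exact stretch_mem_convergenceSet hd.1 hd'.1 hΛ hclose hclose' hb

theorem shrink_le_manhattanTheta [Infinite G] (hd : InD d) (hd' : InD d') (he : InD e)
    (he' : InD e') (hΛ : 0 < Λ) (hclose : ScaleClose Λ C (d · 1) (e · 1))
    (hclose' : ScaleClose Λ C (d' · 1) (e' · 1)) (a : ℝ) :
    shrink Λ (ManhattanTheta d d' (stretch Λ a)) ≤ ManhattanTheta e e' a := by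
  have h := manhattanTheta_le_stretch he he' hd hd' hΛ (hclose.symm hΛ) (hclose'.symm hΛ)
    (stretch Λ a)
  rw [shrink_stretch hΛ] at h
  exact (stretchIso hΛ).symm_apply_le.2 h

end Comparison

theorem tendsto_deriv_of_tendsto_of_convexOn {ι : Type*} {l : Filter ι} {f : ι → ℝ → ℝ}
    {g : ℝ → ℝ} {s : Set ℝ} {a : ℝ} (hconv : ∀ i, ConvexOn ℝ s (f i)) (hs : s ∈ 𝓝 a)
    (hf : ∀ i, DifferentiableAt ℝ (f i) a) (hg : DifferentiableAt ℝ g a)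
    (hlim : ∀ x, Tendsto (fun i => f i x) l (𝓝 (g x))) :
    Tendsto (fun i => deriv (f i) a) l (𝓝 (deriv g a)) := by
  have hslope : ∀ y, Tendsto (fun i => slope (f i) a y) l (𝓝 (slope g a y)) := fun y =>
    ((hlim y).sub (hlim a)).const_smul _
  obtain ⟨hleft, hright⟩ := hasDerivAt_iff_tendsto_slope_left_right.1 hg.hasDerivAt
  refine tendsto_order.2 ⟨fun b hb => ?_, fun b hb => ?_⟩
  · obtain ⟨y, hyb, hya, hys⟩ := ((hleft.eventually (lt_mem_nhds hb)).and
      (inter_mem self_mem_nhdsWithin (mem_nhdsWithin_of_mem_nhds hs))).exists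
    filter_upwards [(hslope y).eventually (lt_mem_nhds hyb)] with i hi
    rw [slope_comm] at hi
    exact hi.trans_le ((hconv i).slope_le_deriv hys (mem_of_mem_nhds hs) hya (hf i))
  · obtain ⟨y, hyb, hya, hys⟩ := ((hright.eventually (gt_mem_nhds hb)).and
      (inter_mem self_mem_nhdsWithin (mem_nhdsWithin_of_mem_nhds hs))).exists
    filter_upwards [(hslope y).eventually (gt_mem_nhds hyb)] with i hi
    exact ((hconv i).deriv_le_slope (mem_of_mem_nhds hs) hys hya (hf i)).trans_lt hi

theorem manhattan_curve_convergence_general (G : Type*) [Group G]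
    (hne : NonElementary G)
    (d d' : G → G → ℝ) (hd : InD d) (hd' : InD d')
    (dn dn' : ℕ → (G → G → ℝ)) (hdn : ∀ n, InD (dn n) ∧ InD (dn' n))
    (Λs Cs : ℕ → ℝ) (hΛ : Tendsto Λs atTop (𝓝 1))
    (hb : ∀ (n : ℕ) (x y : G),
      (Λs n)⁻¹ * d x y - Cs n ≤ dn n x y ∧ dn n x y ≤ Λs n * d x y + Cs n)
    (hb' : ∀ (n : ℕ) (x y : G),
      (Λs n)⁻¹ * d' x y - Cs n ≤ dn' n x y ∧ dn' n x y ≤ Λs n * d' x y + Cs n)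
    (hconvn : ∀ n, ConvexOn ℝ Set.univ (ManhattanTheta (dn n) (dn' n)))
    (hdiffn : ∀ n, ContDiff ℝ 1 (ManhattanTheta (dn n) (dn' n)))
    (hdiff : ContDiff ℝ 1 (ManhattanTheta d d')) :
    (∀ a : ℝ, Tendsto (fun n => ManhattanTheta (dn n) (dn' n) a) atTop
        (𝓝 (ManhattanTheta d d' a))) ∧
    (∀ a : ℝ, Tendsto (fun n => deriv (ManhattanTheta (dn n) (dn' n)) a) atTop
        (𝓝 (deriv (ManhattanTheta d d') a))) := by
  have := hne.infinite
  have hΛpos : ∀ᶠ n in atTop, 0 < Λs n := hΛ.eventually (lt_mem_nhds one_pos)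
  have hΘ := hdiff.continuous.tendsto
  have hlim : ∀ a, Tendsto (fun n => ManhattanTheta (dn n) (dn' n) a) atTop
      (𝓝 (ManhattanTheta d d' a)) := fun a =>
    tendsto_of_tendsto_of_tendsto_of_le_of_le'
      (tendsto_shrink hΛ ((hΘ a).comp (tendsto_stretch hΛ tendsto_const_nhds)))
      (tendsto_stretch hΛ ((hΘ a).comp (tendsto_shrink hΛ tendsto_const_nhds)))
      (hΛpos.mono fun n hn => shrink_le_manhattanTheta hd hd' (hdn n).1 (hdn n).2 hn
        (fun x => hb n x 1) (fun x => hb' n x 1) a)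
      (hΛpos.mono fun n hn => manhattanTheta_le_stretch hd hd' (hdn n).1 (hdn n).2 hn
        (fun x => hb n x 1) (fun x => hb' n x 1) a)
  exact ⟨hlim, fun a => tendsto_deriv_of_tendsto_of_convexOn hconvn univ_mem
    (fun n => ((hdiffn n).differentiable one_ne_zero).differentiableAt)
    ((hdiff.differentiable one_ne_zero).differentiableAt) hlim⟩

/-- If `Λ_n⁻¹d − C_n ≤ d_n ≤ Λ_n d + C_n` and similarly for `d'`,
with `Λ_n → 1` and `C_n ≥ 0`, and all Manhattan curves `Θ_n`, `Θ` are convex and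
continuously differentiable, then `Θ_n → Θ` and `Θ'_n → Θ'` pointwise. -/
theorem manhattan_curve_convergence (G : Type*) [Group G]
    (hG : IsHyperbolicGroup G) (hne : NonElementary G)
    (d d' : G → G → ℝ) (hd : InD d) (hd' : InD d')
    (dn dn' : ℕ → (G → G → ℝ)) (hdn : ∀ n, InD (dn n) ∧ InD (dn' n))
    (Λs Cs : ℕ → ℝ) (hΛ : Tendsto Λs atTop (𝓝 1)) (hΛpos : ∀ n, 0 < Λs n)
    (hCs : ∀ n, 0 ≤ Cs n)
    (hb : ∀ (n : ℕ) (x y : G),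
      (Λs n)⁻¹ * d x y - Cs n ≤ dn n x y ∧ dn n x y ≤ Λs n * d x y + Cs n)
    (hb' : ∀ (n : ℕ) (x y : G),
      (Λs n)⁻¹ * d' x y - Cs n ≤ dn' n x y ∧ dn' n x y ≤ Λs n * d' x y + Cs n)
    (hconvn : ∀ n, ConvexOn ℝ Set.univ (ManhattanTheta (dn n) (dn' n)))
    (hdiffn : ∀ n, ContDiff ℝ 1 (ManhattanTheta (dn n) (dn' n)))
    (hconv : ConvexOn ℝ Set.univ (ManhattanTheta d d'))
    (hdiff : ContDiff ℝ 1 (ManhattanTheta d d')) :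
    (∀ a : ℝ, Tendsto (fun n => ManhattanTheta (dn n) (dn' n) a) atTop
        (𝓝 (ManhattanTheta d d' a))) ∧
    (∀ a : ℝ, Tendsto (fun n => deriv (ManhattanTheta (dn n) (dn' n)) a) atTop
        (𝓝 (deriv (ManhattanTheta d d') a))) :=
  manhattan_curve_convergence_general G hne d d' hd hd' dn dn' hdn Λs Cs hΛ hb hb' hconvn hdiffn
    hdiff

end
end
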